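/- arXiv:2009.03086 — 4 statements merged into one kernel-verified Lean document; each statement's English description precedes it below -/
import Mathlib

section
/- Let Ω ⊂ ℂ be open, S ⊂ Ω finite, f : Ω \ S → ℂ holomorphic, and for each s ∈ S let f_s be the principal part of f at s. Then for any z ∈ Ω \ S and any bounded open set D with piecewise C¹ boundary satisfying S ∪ {z} ⊂ D and closure of D contained in Ω, one has (1/(2πi)) ∮_{∂D} f(ζ)/(ζ−z) dζ = f(z) − Σ_{s∈S} f_s(z). -/
open Filter intervalIntegral
open Metric Set Function MeasureTheory
open scoped Interval


/-- Every entire function has a primitive. -/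
theorem entire_exists_primitive (E : ℂ → ℂ) (hE : Differentiable ℂ E) :
    ∃ V : ℂ → ℂ, ∀ y, HasDerivAt V (E y) y := by
  classical
  set cc : ℕ → ℂ := fun n => (n.factorial : ℂ)⁻¹ * iteratedDeriv n E 0 with hcc
  have hsum : ∀ z : ℂ, HasSum (fun n => cc n * z ^ n) (E z) := by
    intro z
    have := Complex.hasSum_taylorSeries_of_entire hE 0 z
    simpa [hcc, smul_eq_mul, sub_zero, mul_comm, mul_assoc, mul_left_comm] using this
  set g : ℕ → ℂ → ℂ := fun n z => ((n : ℂ) + 1)⁻¹ * cc n * z ^ (n + 1) with hgdef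
  set g' : ℕ → ℂ → ℂ := fun n z => cc n * z ^ n with hg'def
  have hderiv : ∀ n y, HasDerivAt (g n) (g' n y) y := by
    intro n y
    have h1 : HasDerivAt (fun z : ℂ => z ^ (n + 1)) (((n : ℂ) + 1) * y ^ n) y := by
      simpa using hasDerivAt_pow (n + 1) y
    have h2 := h1.const_mul (((n : ℂ) + 1)⁻¹ * cc n)
    refine h2.congr_deriv ?_
    have hne : ((n : ℂ) + 1) ≠ 0 := Nat.cast_add_one_ne_zero n
    field_simp [hg'def]
    rfl
  refine ⟨fun z => ∑' n, g n z, fun y => ?_⟩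
  set R : ℝ := ‖y‖ + 1 with hR
  have hR0 : (0:ℝ) < R := by positivity
  have h2R : (0:ℝ) < 2*R+1 := by linarith
  have hnorm : ∀ n, ‖cc n * ((2*R+1 : ℝ) : ℂ) ^ n‖ = ‖cc n‖ * (2*R+1) ^ n := by
    intro n
    rw [norm_mul, norm_pow, Complex.norm_real, Real.norm_of_nonneg h2R.le]
  have htend : Tendsto (fun n => ‖cc n * ((2*R+1 : ℝ) : ℂ) ^ n‖) atTop (nhds 0) := by
    have := (hsum ((2*R+1 : ℝ) : ℂ)).summable.tendsto_atTop_zero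
    simpa using this.norm
  obtain ⟨B, hB⟩ := htend.bddAbove_range
  have hB' : ∀ n, ‖cc n‖ * (2*R+1) ^ n ≤ B := by
    intro n
    rw [← hnorm n]; exact hB ⟨n, rfl⟩
  set u : ℕ → ℝ := fun n => B * (R / (2*R+1)) ^ n with hu
  have hru : (0:ℝ) ≤ R / (2*R+1) := by positivity
  have hr1 : R / (2*R+1) < 1 := by rw [div_lt_one h2R]; linarith
  have hUsum : Summable u := (summable_geometric_of_lt_one hru hr1).mul_left B
  have hbound : ∀ n, ∀ z ∈ ball (0:ℂ) R, ‖g' n z‖ ≤ u n := by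
    intro n z hz
    have hzR : ‖z‖ ≤ R := le_of_lt (by simpa using hz)
    have h1 : ‖g' n z‖ ≤ ‖cc n‖ * R ^ n := by
      rw [hg'def]
      simp only [norm_mul, norm_pow]
      exact mul_le_mul_of_nonneg_left (pow_le_pow_left₀ (norm_nonneg _) hzR n) (norm_nonneg _)
    have h2 : ‖cc n‖ * R ^ n = (‖cc n‖ * (2*R+1) ^ n) * (R / (2*R+1)) ^ n := by
      rw [div_pow]
      field_simp
    calc ‖g' n z‖ ≤ ‖cc n‖ * R ^ n := h1
      _ = (‖cc n‖ * (2*R+1) ^ n) * (R / (2*R+1)) ^ n := h2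
      _ ≤ B * (R / (2*R+1)) ^ n :=
          mul_le_mul_of_nonneg_right (hB' n) (by positivity)
  have hg0 : Summable fun n => g n 0 := by
    refine Summable.congr summable_zero ?_
    intro n; simp [hgdef]
  have key := hasDerivAt_tsum_of_isPreconnected hUsum isOpen_ball
    (convex_ball (0:ℂ) R).isPreconnected
    (fun n z _ => hderiv n z) hbound (by simpa using hR0)
    hg0 (y := y) (mem_ball_zero_iff.mpr (by rw [hR]; exact lt_add_one _))
  have : (∑' n, g' n y) = E y := (hsum y).tsum_eq
  rwa [this] at key



/-- A holomorphic function on `ℂ ∖ {s}` with `ζ * F ζ → 0` at infinity has a primitive there. -/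
theorem decay_exists_primitive (F : ℂ → ℂ) (s : ℂ)
    (hF : DifferentiableOn ℂ F {s}ᶜ)
    (hdecay : Tendsto (fun ζ => ζ * F ζ) (Bornology.cobounded ℂ) (nhds 0)) :
    ∃ P : ℂ → ℂ, ∀ ζ, ζ ≠ s → HasDerivAt P (F ζ) ζ := by
  classical
  have hne0 : ∀ᶠ ζ : ℂ in Bornology.cobounded ℂ, ζ ≠ 0 := by
    filter_upwards [eventually_cobounded_le_norm (1:ℝ)] with ζ h
    intro h0; rw [h0] at h; norm_num at h
  have hFz : Tendsto F (Bornology.cobounded ℂ) (nhds 0) := by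
    have h : Tendsto (fun ζ : ℂ => ζ * F ζ * ζ⁻¹) (Bornology.cobounded ℂ) (nhds 0) := by
      simpa using hdecay.mul tendsto_inv₀_cobounded
    refine h.congr' ?_
    filter_upwards [hne0] with ζ hζ
    rw [mul_comm ζ (F ζ), mul_assoc, mul_inv_cancel₀ hζ, mul_one]
  -- the map w ↦ s + w⁻¹ tends to cobounded as w → 0 within ≠ 0
  have hmap : Tendsto (fun w : ℂ => s + w⁻¹) (nhdsWithin 0 {0}ᶜ) (Bornology.cobounded ℂ) := by
    rw [← tendsto_norm_atTop_iff_cobounded]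
    have h1 : Tendsto (fun w : ℂ => ‖w⁻¹‖) (nhdsWithin 0 {0}ᶜ) atTop := by
      have h2 : Tendsto (fun w : ℂ => ‖w‖) (nhdsWithin 0 {0}ᶜ) (nhdsWithin 0 (Set.Ioi 0)) := by
        apply tendsto_nhdsWithin_of_tendsto_nhds_of_eventually_within
        · exact ((continuous_norm.tendsto' 0 _ (by simp)).mono_left nhdsWithin_le_nhds)
        · filter_upwards [self_mem_nhdsWithin] with w hw
          simpa [norm_pos_iff] using hw
      simpa [Function.comp_def] using tendsto_inv_nhdsGT_zero.comp h2
    have h3 : ∀ w : ℂ, ‖w⁻¹‖ - ‖s‖ ≤ ‖s + w⁻¹‖ := by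
      intro w
      have h := norm_sub_le (s + w⁻¹) s
      simp only [add_sub_cancel_left] at h
      linarith
    exact tendsto_atTop_mono h3 (tendsto_atTop_add_const_right _ _ h1)
  set u : ℂ → ℂ := Function.update (fun w => F (s + w⁻¹)) 0 0 with hu
  have hu_off : ∀ w : ℂ, w ≠ 0 → u w = F (s + w⁻¹) := fun w hw => update_of_ne hw _ _
  have hraw : DifferentiableOn ℂ u ({0}ᶜ : Set ℂ) := by
    intro w hw
    have hw0 : w ≠ 0 := hw
    have h1 : DifferentiableAt ℂ (fun w : ℂ => F (s + w⁻¹)) w := by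
      have hF' : DifferentiableAt ℂ F (s + w⁻¹) := by
        have hmem : s + w⁻¹ ∈ ({s}ᶜ : Set ℂ) := by
          simp [inv_ne_zero hw0]
        exact (hF _ hmem).differentiableAt (isOpen_compl_singleton.mem_nhds hmem)
      exact hF'.comp w ((differentiableAt_const s).add (differentiableAt_inv hw0))
    have : u =ᶠ[nhds w] fun w => F (s + w⁻¹) := by
      filter_upwards [isOpen_compl_singleton.mem_nhds hw] with x hx
      exact hu_off x hx
    exact ((h1.congr_of_eventuallyEq this).differentiableWithinAt)
  have hucont : ContinuousAt u 0 := by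
    rw [hu, continuousAt_update_same]
    exact hFz.comp hmap
  have hu_diff : Differentiable ℂ u := by
    rw [← differentiableOn_univ]
    rw [← Complex.differentiableOn_compl_singleton_and_continuousAt_iff
      (univ_mem : (univ : Set ℂ) ∈ nhds 0)]
    exact ⟨hraw.mono (by intro x hx; exact hx.2), hucont⟩
  have hu0 : u 0 = 0 := update_self _ _ _
  set u₂ : ℂ → ℂ := dslope u 0 with hu₂
  have hu₂_diff : Differentiable ℂ u₂ := by
    rw [← differentiableOn_univ]
    exact (Complex.differentiableOn_dslope (univ_mem : (univ : Set ℂ) ∈ nhds 0)).mpr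
      hu_diff.differentiableOn
  have hu₂_off : ∀ w : ℂ, w ≠ 0 → u₂ w = w⁻¹ * u w := by
    intro w hw
    rw [hu₂, dslope_of_ne _ hw, slope_def_field, hu0]
    rw [sub_zero, sub_zero, div_eq_inv_mul]
  have hu₂0 : u₂ 0 = 0 := by
    have h1 : Tendsto u₂ (nhdsWithin 0 {0}ᶜ) (nhds (u₂ 0)) :=
      (hu₂_diff.continuous.tendsto 0).mono_left nhdsWithin_le_nhds
    have h2 : Tendsto u₂ (nhdsWithin 0 {0}ᶜ) (nhds 0) := by
      have key : ∀ w : ℂ, w ≠ 0 → u₂ w = (s + w⁻¹) * F (s + w⁻¹) - s * F (s + w⁻¹) := by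
        intro w hw
        rw [hu₂_off w hw, hu_off w hw]; ring
      have h3 : Tendsto (fun w : ℂ => (s + w⁻¹) * F (s + w⁻¹) - s * F (s + w⁻¹))
          (nhdsWithin 0 {0}ᶜ) (nhds 0) := by
        have ha := (hdecay.comp hmap).sub ((hFz.comp hmap).const_mul s)
        simpa using ha
      refine h3.congr' ?_
      filter_upwards [self_mem_nhdsWithin] with w hw
      exact (key w hw).symm
    exact tendsto_nhds_unique h1 h2
  set EE : ℂ → ℂ := dslope u₂ 0 with hEE
  have hEE_diff : Differentiable ℂ EE := by
    rw [← differentiableOn_univ]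
    exact (Complex.differentiableOn_dslope (univ_mem : (univ : Set ℂ) ∈ nhds 0)).mpr
      hu₂_diff.differentiableOn
  have hEE_off : ∀ w : ℂ, w ≠ 0 → u w = w ^ 2 * EE w := by
    intro w hw
    have h1 : EE w = w⁻¹ * u₂ w := by
      rw [hEE, dslope_of_ne _ hw, slope_def_field, hu₂0]
      rw [sub_zero, sub_zero, div_eq_inv_mul]
    rw [h1, hu₂_off w hw]
    rw [show w ^ 2 * (w⁻¹ * (w⁻¹ * u w)) = (w * w⁻¹) * ((w * w⁻¹) * u w) by ring,
      mul_inv_cancel₀ hw, one_mul, one_mul]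
  obtain ⟨V, hV⟩ := entire_exists_primitive EE hEE_diff
  refine ⟨fun ζ => -V ((ζ - s)⁻¹), fun ζ hζ => ?_⟩
  have hζs : ζ - s ≠ 0 := sub_ne_zero.mpr hζ
  have hω : (ζ - s)⁻¹ ≠ 0 := inv_ne_zero hζs
  have h1 : HasDerivAt (fun ζ : ℂ => (ζ - s)⁻¹) (-1 / (ζ - s) ^ 2) ζ := by
    have := ((hasDerivAt_id ζ).sub_const s).inv hζs
    simp at this
    exact this
  have h2 := (hV ((ζ - s)⁻¹)).comp ζ h1
  have h3 := h2.neg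
  refine h3.congr_deriv ?_
  have hFu : F ζ = u ((ζ - s)⁻¹) := by
    rw [hu_off _ hω, inv_inv]
    congr 1; ring
  rw [hFu, hEE_off _ hω]
  rw [show -(EE ((ζ - s)⁻¹) * (-1 / (ζ - s) ^ 2)) = EE ((ζ - s)⁻¹) * (1 / (ζ - s) ^ 2) by ring]
  rw [inv_pow, one_div]
  ring


/-- Integral of a function with a primitive along a closed `C¹` curve vanishes. -/
theorem closed_curve_integral_eq_zero
    (γ : ℝ → ℂ) (hγ : ContDiffOn ℝ 1 γ (Set.Icc 0 1)) (hclosed : γ 0 = γ 1)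
    (V : Set ℂ) (hV : IsOpen V) (hmem : ∀ t ∈ Set.Icc (0:ℝ) 1, γ t ∈ V)
    (F : ℂ → ℂ) (hFc : ContinuousOn F V)
    (P : ℂ → ℂ) (hP : ∀ ζ ∈ V, HasDerivAt P (F ζ) ζ) :
    (∫ t in (0:ℝ)..1, derivWithin γ (Set.Icc 0 1) t * F (γ t)) = 0 := by
  set φ : ℝ → ℂ := derivWithin γ (Set.Icc 0 1) with hφ
  have hφc : ContinuousOn φ (Set.Icc 0 1) :=
    hγ.continuousOn_derivWithin (uniqueDiffOn_Icc zero_lt_one) le_rfl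
  have hγc : ContinuousOn γ (Set.Icc 0 1) := hγ.continuousOn
  have hint : IntervalIntegrable (fun t => φ t * F (γ t)) MeasureTheory.volume 0 1 := by
    apply ContinuousOn.intervalIntegrable
    rw [Set.uIcc_of_le (by norm_num : (0:ℝ) ≤ 1)]
    exact hφc.mul (hFc.comp hγc hmem)
  have hPc : ContinuousOn P V := fun x hx => ((hP x hx).differentiableAt.continuousAt).continuousWithinAt
  have hcont : ContinuousOn (P ∘ γ) (Set.Icc 0 1) := hPc.comp hγc hmem
  have hderiv : ∀ t ∈ Set.Ioo (0:ℝ) 1, HasDerivWithinAt (P ∘ γ) (φ t * F (γ t)) (Set.Ioi t) t := by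
    intro t ht
    have hnh : Set.Icc (0:ℝ) 1 ∈ nhds t := Icc_mem_nhds ht.1 ht.2
    have hd : DifferentiableAt ℝ γ t :=
      ((hγ.differentiableOn one_ne_zero) t (Set.mem_Icc_of_Ioo ht)).differentiableAt hnh
    have hφt : φ t = deriv γ t := derivWithin_of_mem_nhds hnh
    have hγt : HasDerivAt γ (deriv γ t) t := hd.hasDerivAt
    have h2 := (hP (γ t) (hmem t (Set.mem_Icc_of_Ioo ht))).comp t hγt
    have h3 : HasDerivAt (P ∘ γ) (φ t * F (γ t)) t := by
      rw [hφt]; exact h2.congr_deriv (by ring)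
    exact h3.hasDerivWithinAt
  have key := integral_eq_sub_of_hasDeriv_right_of_le (by norm_num : (0:ℝ) ≤ 1)
    hcont hderiv hint
  rw [key]
  simp [Function.comp, hclosed]


lemma dslope_symm (g : ℂ → ℂ) (a b : ℂ) : dslope g a b = dslope g b a := by
  rcases eq_or_ne b a with rfl | h
  · rfl
  · rw [dslope_of_ne _ h, dslope_of_ne _ (Ne.symm h), slope_comm]

lemma dslope_bound_on_compact {Ω : Set ℂ} (hΩ : IsOpen Ω) {g : ℂ → ℂ}
    (hg : DifferentiableOn ℂ g Ω) {K' : Set ℂ} (hK' : IsCompact K') (hK'Ω : K' ⊆ Ω) :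
    ∃ M, 0 ≤ M ∧ ∀ x ∈ K', ∀ y ∈ K', ‖dslope g x y‖ ≤ M := by
  rcases K'.eq_empty_or_nonempty with rfl | hne
  · exact ⟨0, le_refl _, by simp⟩
  obtain ⟨ρ, hρ0, hρ⟩ := hK'.exists_cthickening_subset_open hΩ hK'Ω
  set K'' : Set ℂ := cthickening ρ K' with hK''def
  have hK''c : IsCompact K'' := hK'.cthickening
  have hK''Ω : K'' ⊆ Ω := hρ
  have hsub : K' ⊆ K'' := self_subset_cthickening _
  have hgdiff : ∀ u ∈ K'', DifferentiableAt ℂ g u := fun u hu =>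
    (hg u (hK''Ω hu)).differentiableAt (hΩ.mem_nhds (hK''Ω hu))
  have hgcont : ContinuousOn g K'' := (hg.mono hK''Ω).continuousOn
  have hdg_cont : ContinuousOn (deriv g) K'' :=
    (((hg.analyticOnNhd hΩ).deriv).continuousOn).mono hK''Ω
  obtain ⟨Mg, hMg⟩ := hK''c.exists_bound_of_continuousOn hgcont
  obtain ⟨Lg, hLg⟩ := hK''c.exists_bound_of_continuousOn hdg_cont
  have hMg0 : 0 ≤ Mg := le_trans (norm_nonneg _) (hMg _ (hsub hne.choose_spec))
  have hLg0 : 0 ≤ Lg := le_trans (norm_nonneg _) (hLg _ (hsub hne.choose_spec))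
  refine ⟨max Lg (2 * Mg / ρ), le_trans hLg0 (le_max_left _ _), fun x hx y hy => ?_⟩
  by_cases hd : dist x y ≤ ρ
  · -- near case: mean value inequality on the ball `closedBall x ρ`
    have hball : closedBall x ρ ⊆ K'' := by
      intro u hu
      exact mem_cthickening_of_dist_le u x ρ K' hx (by simpa [dist_comm] using hu)
    rcases eq_or_ne y x with rfl | hyx
    · rw [dslope_same]
      exact le_trans (hLg _ (hsub hx)) (le_max_left _ _)
    have hmvt := Convex.norm_image_sub_le_of_norm_hasDerivWithin_le
      (f := g) (f' := deriv g) (s := closedBall x ρ)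
      (fun u hu => ((hgdiff u (hball hu)).hasDerivAt).hasDerivWithinAt)
      (fun u hu => hLg u (hball hu)) (convex_closedBall x ρ)
      (mem_closedBall_self hρ0.le) (by simpa [dist_comm] using hd)
    rw [dslope_of_ne _ hyx, slope_def_field]
    have hxy0 : ‖y - x‖ ≠ 0 := by
      simpa [sub_eq_zero] using hyx
    have hpos : (0:ℝ) < ‖y - x‖ := lt_of_le_of_ne (norm_nonneg _) (Ne.symm hxy0)
    calc ‖(g y - g x) / (y - x)‖ = ‖g y - g x‖ / ‖y - x‖ := by rw [norm_div]
      _ ≤ (Lg * ‖y - x‖) / ‖y - x‖ := div_le_div_of_nonneg_right hmvt hpos.le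
      _ = Lg := mul_div_cancel_right₀ Lg hxy0
      _ ≤ max Lg (2 * Mg / ρ) := le_max_left _ _
  · -- far case
    push_neg at hd
    have hyx : y ≠ x := by
      intro h; rw [h] at hd; simp at hd; linarith
    rw [dslope_of_ne _ hyx, slope_def_field]
    have hnorm : ρ ≤ ‖y - x‖ := by
      rw [← norm_sub_rev x y]
      calc ρ ≤ dist x y := hd.le
        _ = ‖x - y‖ := dist_eq_norm x y
    calc ‖(g y - g x) / (y - x)‖ = ‖g y - g x‖ / ‖y - x‖ := by rw [norm_div]
      _ ≤ (2 * Mg) / ρ := by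
          apply div_le_div₀ (by positivity) ?_ hρ0 hnorm
          calc ‖g y - g x‖ ≤ ‖g y‖ + ‖g x‖ := norm_sub_le _ _
            _ ≤ Mg + Mg := add_le_add (hMg _ (hsub hy)) (hMg _ (hsub hx))
            _ = 2 * Mg := by ring
      _ ≤ max Lg (2 * Mg / ρ) := le_max_right _ _

lemma deriv_dslope_eq {Ω : Set ℂ} (hΩ : IsOpen Ω) {g : ℂ → ℂ}
    (hg : DifferentiableOn ℂ g Ω) {x : ℂ} (hx : x ∈ Ω) {ζ : ℂ} (hζ : ζ ≠ x) :
    deriv (dslope g ζ) x = deriv g x * (x - ζ)⁻¹ - (g x - g ζ) * ((x - ζ) ^ 2)⁻¹ := by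
  have hxζ : x - ζ ≠ 0 := sub_ne_zero.mpr (Ne.symm hζ)
  have h1 : HasDerivAt (fun y : ℂ => g y - g ζ) (deriv g x) x := by
    simpa using (((hg x hx).differentiableAt (hΩ.mem_nhds hx)).hasDerivAt).sub_const (g ζ)
  have h2 : HasDerivAt (fun y : ℂ => (y - ζ)⁻¹) (-1 / (x - ζ) ^ 2) x := by
    have := ((hasDerivAt_id x).sub_const ζ).inv hxζ
    simp at this
    exact this
  have h3 := h1.fun_mul h2
  have heq : dslope g ζ =ᶠ[nhds x] fun y => (g y - g ζ) * (y - ζ)⁻¹ := by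
    filter_upwards [isOpen_ne.mem_nhds hζ.symm] with y (hy : y ≠ ζ)
    rw [dslope_of_ne _ hy, slope_def_field, div_eq_mul_inv]
  rw [heq.deriv_eq, h3.deriv]
  field_simp
  ring





lemma inner_hasDerivAt {Ω : Set ℂ} (hΩ : IsOpen Ω) {g : ℂ → ℂ} (hg : DifferentiableOn ℂ g Ω)
    {K : Set ℂ} (hK : IsCompact K) (hKΩ : K ⊆ Ω)
    (γ : ℝ → ℂ) (hγ : ContDiffOn ℝ 1 γ (Icc 0 1))
    (hγK : ∀ t ∈ Icc (0:ℝ) 1, γ t ∈ K)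
    {w₀ : ℂ} (hw₀ : w₀ ∈ Ω) :
    ∃ d, HasDerivAt
      (fun w => ∫ t in (0:ℝ)..1, derivWithin γ (Icc 0 1) t * dslope g w (γ t)) d w₀ := by
  classical
  set φ : ℝ → ℂ := derivWithin γ (Icc 0 1) with hφdef
  have hφc : ContinuousOn φ (Icc 0 1) :=
    hγ.continuousOn_derivWithin (uniqueDiffOn_Icc zero_lt_one) le_rfl
  have hγc : ContinuousOn γ (Icc 0 1) := hγ.continuousOn
  have hγΩ : ∀ t ∈ Icc (0:ℝ) 1, γ t ∈ Ω := fun t ht => hKΩ (hγK t ht)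
  obtain ⟨r, hr0, hrΩ⟩ := Metric.isOpen_iff.mp hΩ w₀ hw₀
  set ε : ℝ := r / 4 with hεdef
  have hε : 0 < ε := by positivity
  have h3ε : closedBall w₀ (3 * ε) ⊆ Ω := by
    refine subset_trans ?_ hrΩ
    intro u hu
    rw [mem_closedBall] at hu
    rw [mem_ball]
    calc dist u w₀ ≤ 3 * ε := hu
      _ < r := by rw [hεdef]; linarith
  set K' : Set ℂ := closedBall w₀ (3 * ε) ∪ K with hK'def
  have hK'c : IsCompact K' := (isCompact_closedBall _ _).union hK
  have hK'Ω : K' ⊆ Ω := union_subset h3ε hKΩ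
  obtain ⟨M, hM0, hM⟩ := dslope_bound_on_compact hΩ hg hK'c hK'Ω
  obtain ⟨Cφ, hCφ⟩ := isCompact_Icc.exists_bound_of_continuousOn hφc
  have hCφ0 : 0 ≤ Cφ := le_trans (norm_nonneg _) (hCφ 0 (by norm_num))
  have hds_diff : ∀ ζ ∈ Ω, DifferentiableOn ℂ (dslope g ζ) Ω := fun ζ hζ =>
    (Complex.differentiableOn_dslope (hΩ.mem_nhds hζ)).mpr hg
  set F : ℂ → ℝ → ℂ := fun x t => φ t * dslope g (γ t) x with hFdef
  set F' : ℂ → ℝ → ℂ := fun x t => φ t * deriv (dslope g (γ t)) x with hF'def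
  have huIoc : Ι (0:ℝ) 1 = Ioc (0:ℝ) 1 := uIoc_of_le zero_le_one
  have hres : Measure.restrict volume (Ι (0:ℝ) 1) ≤ Measure.restrict volume (Icc (0:ℝ) 1) := by
    rw [huIoc]; exact Measure.restrict_mono Ioc_subset_Icc_self le_rfl
  have hmeas_gen : ∀ x ∈ Ω, AEStronglyMeasurable (F x) (volume.restrict (Ι (0:ℝ) 1)) := by
    intro x hx
    have hc : ContinuousOn (F x) (Icc 0 1) := by
      have h1 : ContinuousOn (fun t => dslope g x (γ t)) (Icc 0 1) :=
        ((hds_diff x hx).continuousOn).comp hγc hγΩ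
      have h2 : ContinuousOn (fun t => dslope g (γ t) x) (Icc 0 1) :=
        h1.congr (fun t _ => dslope_symm g (γ t) x)
      exact hφc.mul h2
    exact (hc.aestronglyMeasurable measurableSet_Icc).mono_measure hres
  have hF_meas : ∀ᶠ x in nhds w₀, AEStronglyMeasurable (F x) (volume.restrict (Ι (0:ℝ) 1)) := by
    filter_upwards [hΩ.mem_nhds hw₀] with x hx using hmeas_gen x hx
  have hF_int : IntervalIntegrable (F w₀) volume 0 1 := by
    apply ContinuousOn.intervalIntegrable
    rw [uIcc_of_le zero_le_one]
    have h1 : ContinuousOn (fun t => dslope g w₀ (γ t)) (Icc 0 1) :=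
      ((hds_diff w₀ hw₀).continuousOn).comp hγc hγΩ
    exact hφc.mul (h1.congr (fun t _ => dslope_symm g (γ t) w₀))
  -- measurability of F' w₀
  set c₀ : ℂ := deriv (dslope g w₀) w₀ with hc₀def
  set q : ℝ → ℂ :=
    fun t => deriv g w₀ * (w₀ - γ t)⁻¹ - (g w₀ - g (γ t)) * ((w₀ - γ t) ^ 2)⁻¹ with hqdef
  set s₀ : Set ℝ := Icc (0:ℝ) 1 ∩ γ ⁻¹' {w₀} with hs₀def
  have hs₀meas : MeasurableSet s₀ :=
    (hγc.preimage_isClosed_of_isClosed isClosed_Icc isClosed_singleton).measurableSet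
  have htotal : ∀ t ∈ Icc (0:ℝ) 1,
      F' w₀ t = φ t * q t + Set.indicator s₀ (fun t => φ t * c₀ - φ t * q t) t := by
    intro t ht
    by_cases hts : γ t = w₀
    · have hts₀ : t ∈ s₀ := ⟨ht, by simp [hts]⟩
      rw [Set.indicator_of_mem hts₀]
      simp only [hF'def, hts, hc₀def]
      ring
    · rw [Set.indicator_of_notMem (by simp [hs₀def, hts] : t ∉ s₀)]
      simp only [hF'def]
      rw [deriv_dslope_eq hΩ hg hw₀ hts]
      rw [hqdef]
      ring
  have haem : ∀ (h : ℝ → ℂ), ContinuousOn h (Icc 0 1) →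
      AEMeasurable h (volume.restrict (Ι (0:ℝ) 1)) := by
    intro h hc
    exact ((hc.aestronglyMeasurable measurableSet_Icc).mono_measure hres).aemeasurable
  have hq_aem : AEMeasurable q (volume.restrict (Ι (0:ℝ) 1)) := by
    have h1 : AEMeasurable (fun t => (w₀ - γ t)⁻¹) (volume.restrict (Ι (0:ℝ) 1)) :=
      measurable_inv.comp_aemeasurable
        (haem _ (continuousOn_const.sub hγc))
    have h2 : AEMeasurable (fun t => ((w₀ - γ t) ^ 2)⁻¹) (volume.restrict (Ι (0:ℝ) 1)) :=
      measurable_inv.comp_aemeasurable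
        (haem _ ((continuousOn_const.sub hγc).pow 2))
    have h3 : AEMeasurable (fun t => g (γ t)) (volume.restrict (Ι (0:ℝ) 1)) :=
      haem _ (hg.continuousOn.comp hγc hγΩ)
    exact ((aemeasurable_const.mul h1).sub
      ((aemeasurable_const.sub h3).mul h2))
  have hφ_aem : AEMeasurable φ (volume.restrict (Ι (0:ℝ) 1)) := haem _ hφc
  have hF'_meas : AEStronglyMeasurable (F' w₀) (volume.restrict (Ι (0:ℝ) 1)) := by
    have hbase : AEStronglyMeasurable
        (fun t => φ t * q t + Set.indicator s₀ (fun t => φ t * c₀ - φ t * q t) t)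
        (volume.restrict (Ι (0:ℝ) 1)) := by
      have h1 : AEStronglyMeasurable (fun t => φ t * q t) (volume.restrict (Ι (0:ℝ) 1)) :=
        aestronglyMeasurable_iff_aemeasurable.mpr (hφ_aem.mul hq_aem)
      have h2 : AEStronglyMeasurable (fun t => φ t * c₀ - φ t * q t)
          (volume.restrict (Ι (0:ℝ) 1)) :=
        aestronglyMeasurable_iff_aemeasurable.mpr
          ((hφ_aem.mul aemeasurable_const).sub (hφ_aem.mul hq_aem))
      exact h1.add (h2.indicator hs₀meas)
    refine hbase.congr ?_
    rw [huIoc, Filter.EventuallyEq, ae_restrict_iff' measurableSet_Ioc]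
    exact ae_of_all _ (fun t ht => (htotal t (Ioc_subset_Icc_self ht)).symm)
  -- the uniform bound
  have hball_sub : ∀ x ∈ ball w₀ ε, closedBall x (2 * ε) ⊆ closedBall w₀ (3 * ε) := by
    intro x hx u hu
    rw [mem_closedBall] at *
    calc dist u w₀ ≤ dist u x + dist x w₀ := dist_triangle _ _ _
      _ ≤ 2 * ε + ε := add_le_add hu (le_of_lt (by rwa [← mem_ball]))
      _ = 3 * ε := by ring
  have h_bound : ∀ᵐ t ∂(volume : Measure ℝ), t ∈ Ι (0:ℝ) 1 →
      ∀ x ∈ ball w₀ ε, ‖F' x t‖ ≤ Cφ * (M / (2 * ε)) := by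
    refine ae_of_all _ (fun t ht x hx => ?_)
    rw [huIoc] at ht
    have ht' : t ∈ Icc (0:ℝ) 1 := Ioc_subset_Icc_self ht
    have hζΩ : γ t ∈ Ω := hγΩ t ht'
    have hdiffcl : DiffContOnCl ℂ (dslope g (γ t)) (ball x (2 * ε)) := by
      apply DifferentiableOn.diffContOnCl
      refine (hds_diff (γ t) hζΩ).mono ?_
      exact subset_trans closure_ball_subset_closedBall
        (subset_trans (hball_sub x hx) h3ε)
    have hsphere : ∀ y ∈ sphere x (2 * ε), ‖dslope g (γ t) y‖ ≤ M := by
      intro y hy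
      have hy' : y ∈ K' := by
        rw [hK'def]
        left
        exact hball_sub x hx (sphere_subset_closedBall hy)
      rw [dslope_symm]
      exact hM y hy' (γ t) (by rw [hK'def]; right; exact hγK t ht')
    have key := Complex.norm_deriv_le_of_forall_mem_sphere_norm_le
      (by positivity : (0:ℝ) < 2 * ε) hdiffcl hsphere
    calc ‖F' x t‖ = ‖φ t‖ * ‖deriv (dslope g (γ t)) x‖ := norm_mul _ _
      _ ≤ Cφ * (M / (2 * ε)) :=
        mul_le_mul (hCφ t ht') key (norm_nonneg _) hCφ0
  have h_diff : ∀ᵐ t ∂(volume : Measure ℝ), t ∈ Ι (0:ℝ) 1 →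
      ∀ x ∈ ball w₀ ε, HasDerivAt (fun y => F y t) (F' x t) x := by
    refine ae_of_all _ (fun t ht x hx => ?_)
    rw [huIoc] at ht
    have ht' : t ∈ Icc (0:ℝ) 1 := Ioc_subset_Icc_self ht
    have hxΩ : x ∈ Ω := h3ε (by
      rw [mem_closedBall]
      have := mem_ball.mp hx
      nlinarith [hε])
    have hd : DifferentiableAt ℂ (dslope g (γ t)) x :=
      ((hds_diff (γ t) (hγΩ t ht')) x hxΩ).differentiableAt (hΩ.mem_nhds hxΩ)
    exact hd.hasDerivAt.const_mul (φ t)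
  have conc := (intervalIntegral.hasDerivAt_integral_of_dominated_loc_of_deriv_le (ball_mem_nhds w₀ hε)
    hF_meas hF_int hF'_meas h_bound intervalIntegrable_const h_diff).2
  have hfun : (fun w => ∫ t in (0:ℝ)..1, φ t * dslope g w (γ t))
      = fun x => ∫ t in (0:ℝ)..1, F x t := by
    funext x
    exact intervalIntegral.integral_congr (fun t _ => by rw [dslope_symm])
  rw [hφdef] at hfun
  rw [hfun]
  exact ⟨_, conc⟩

lemma outer_hasDerivAt {K : Set ℂ} (hKc : IsClosed K) (g : ℂ → ℂ)
    (γ : ℝ → ℂ) (hγ : ContDiffOn ℝ 1 γ (Icc 0 1))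
    (hγK : ∀ t ∈ Icc (0:ℝ) 1, γ t ∈ K)
    (hgγ : ContinuousOn (fun t => g (γ t)) (Icc 0 1))
    {w₀ : ℂ} (hw₀ : w₀ ∉ K) :
    ∃ d, HasDerivAt
      (fun w => ∫ t in (0:ℝ)..1,
        derivWithin γ (Icc 0 1) t * (g (γ t) * (γ t - w)⁻¹)) d w₀ := by
  classical
  set φ : ℝ → ℂ := derivWithin γ (Icc 0 1) with hφdef
  have hφc : ContinuousOn φ (Icc 0 1) :=
    hγ.continuousOn_derivWithin (uniqueDiffOn_Icc zero_lt_one) le_rfl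
  have hγc : ContinuousOn γ (Icc 0 1) := hγ.continuousOn
  obtain ⟨r, hr0, hrK⟩ := Metric.isOpen_iff.mp hKc.isOpen_compl w₀ hw₀
  set ε : ℝ := r / 2 with hεdef
  have hε : 0 < ε := by positivity
  have hfar : ∀ x ∈ ball w₀ ε, ∀ t ∈ Icc (0:ℝ) 1, ε ≤ ‖γ t - x‖ := by
    intro x hx t ht
    by_contra hcon
    push_neg at hcon
    have h1 : dist (γ t) w₀ < r := by
      calc dist (γ t) w₀ ≤ dist (γ t) x + dist x w₀ := dist_triangle _ _ _
        _ < ε + ε := add_lt_add (by rwa [dist_eq_norm]) (mem_ball.mp hx)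
        _ = r := by rw [hεdef]; ring
    exact (hrK (mem_ball.mpr h1)) (hγK t ht)
  have hne : ∀ x ∈ ball w₀ ε, ∀ t ∈ Icc (0:ℝ) 1, γ t - x ≠ 0 := by
    intro x hx t ht h0
    have := hfar x hx t ht
    rw [h0] at this
    simp at this
    linarith
  obtain ⟨Cφ, hCφ⟩ := isCompact_Icc.exists_bound_of_continuousOn hφc
  have hCφ0 : 0 ≤ Cφ := le_trans (norm_nonneg _) (hCφ 0 (by norm_num))
  obtain ⟨Cg, hCg⟩ := isCompact_Icc.exists_bound_of_continuousOn hgγ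
  have hCg0 : 0 ≤ Cg := le_trans (norm_nonneg _) (hCg 0 (by norm_num))
  set F : ℂ → ℝ → ℂ := fun x t => φ t * (g (γ t) * (γ t - x)⁻¹) with hFdef
  set F' : ℂ → ℝ → ℂ := fun x t => φ t * (g (γ t) * ((γ t - x) ^ 2)⁻¹) with hF'def
  have huIoc : Ι (0:ℝ) 1 = Ioc (0:ℝ) 1 := uIoc_of_le zero_le_one
  have hres : Measure.restrict volume (Ι (0:ℝ) 1) ≤ Measure.restrict volume (Icc (0:ℝ) 1) := by
    rw [huIoc]; exact Measure.restrict_mono Ioc_subset_Icc_self le_rfl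
  have hcontF : ∀ x ∈ ball w₀ ε, ContinuousOn (F x) (Icc 0 1) := by
    intro x hx
    exact hφc.mul (hgγ.mul ((hγc.sub continuousOn_const).inv₀ (fun t ht => hne x hx t ht)))
  have hcontF' : ∀ x ∈ ball w₀ ε, ContinuousOn (F' x) (Icc 0 1) := by
    intro x hx
    refine hφc.mul (hgγ.mul (ContinuousOn.inv₀ ?_ ?_))
    · exact (hγc.sub continuousOn_const).pow 2
    · intro t ht
      exact pow_ne_zero 2 (hne x hx t ht)
  have hF_meas : ∀ᶠ x in nhds w₀, AEStronglyMeasurable (F x) (volume.restrict (Ι (0:ℝ) 1)) := by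
    filter_upwards [ball_mem_nhds w₀ hε] with x hx
    exact ((hcontF x hx).aestronglyMeasurable measurableSet_Icc).mono_measure hres
  have hw₀ball : w₀ ∈ ball w₀ ε := mem_ball_self hε
  have hF_int : IntervalIntegrable (F w₀) volume 0 1 := by
    apply ContinuousOn.intervalIntegrable
    rw [uIcc_of_le zero_le_one]
    exact hcontF w₀ hw₀ball
  have hF'_meas : AEStronglyMeasurable (F' w₀) (volume.restrict (Ι (0:ℝ) 1)) :=
    ((hcontF' w₀ hw₀ball).aestronglyMeasurable measurableSet_Icc).mono_measure hres
  have h_bound : ∀ᵐ t ∂(volume : Measure ℝ), t ∈ Ι (0:ℝ) 1 →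
      ∀ x ∈ ball w₀ ε, ‖F' x t‖ ≤ Cφ * (Cg * (ε ^ 2)⁻¹) := by
    refine ae_of_all _ (fun t ht x hx => ?_)
    rw [huIoc] at ht
    have ht' : t ∈ Icc (0:ℝ) 1 := Ioc_subset_Icc_self ht
    have h1 : ‖((γ t - x) ^ 2)⁻¹‖ ≤ (ε ^ 2)⁻¹ := by
      rw [norm_inv, norm_pow]
      apply inv_anti₀ (by positivity)
      exact pow_le_pow_left₀ hε.le (hfar x hx t ht') 2
    calc ‖F' x t‖ = ‖φ t‖ * (‖g (γ t)‖ * ‖((γ t - x) ^ 2)⁻¹‖) := by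
          rw [hF'def]; simp [norm_mul]
      _ ≤ Cφ * (Cg * (ε ^ 2)⁻¹) := by
          apply mul_le_mul (hCφ t ht') ?_ (by positivity) hCφ0
          exact mul_le_mul (hCg t ht') h1 (norm_nonneg _) hCg0
  have h_diff : ∀ᵐ t ∂(volume : Measure ℝ), t ∈ Ι (0:ℝ) 1 →
      ∀ x ∈ ball w₀ ε, HasDerivAt (fun y => F y t) (F' x t) x := by
    refine ae_of_all _ (fun t ht x hx => ?_)
    rw [huIoc] at ht
    have ht' : t ∈ Icc (0:ℝ) 1 := Ioc_subset_Icc_self ht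
    have h1 : HasDerivAt (fun y : ℂ => (γ t - y)⁻¹) (((γ t - x) ^ 2)⁻¹) x := by
      have h2 := ((hasDerivAt_const x (γ t)).sub (hasDerivAt_id x)).inv (hne x hx t ht')
      refine h2.congr_deriv ?_
      field_simp
      simp
      ring
    have h3 := h1.const_mul (φ t * g (γ t))
    have heq : (fun y : ℂ => φ t * g (γ t) * (γ t - y)⁻¹) = fun y => F y t := by
      funext u; rw [hFdef]; ring
    rw [heq] at h3
    refine h3.congr_deriv ?_
    rw [hF'def]; ring
  have conc := (intervalIntegral.hasDerivAt_integral_of_dominated_loc_of_deriv_le (ball_mem_nhds w₀ hε)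
    hF_meas hF_int hF'_meas h_bound intervalIntegrable_const h_diff).2
  exact ⟨_, conc⟩

theorem dixon_formula
    {Ω : Set ℂ} (hΩ : IsOpen Ω) {g : ℂ → ℂ} (hg : DifferentiableOn ℂ g Ω)
    {D : Set ℂ} (hDb : Bornology.IsBounded D) (hDΩ : closure D ⊆ Ω)
    {N : ℕ} {γ : Fin N → ℝ → ℂ}
    (hγ_smooth : ∀ i, ContDiffOn ℝ 1 (γ i) (Icc 0 1))
    (hγ_mem : ∀ i, ∀ t ∈ Icc (0:ℝ) 1, γ i t ∈ closure D \ D)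
    (hwind_in : ∀ w ∈ D, ∑ i : Fin N,
      (∫ t in (0:ℝ)..1, derivWithin (γ i) (Icc 0 1) t * (γ i t - w)⁻¹)
        = 2 * Real.pi * Complex.I)
    (hwind_out : ∀ w ∉ closure D, ∑ i : Fin N,
      (∫ t in (0:ℝ)..1, derivWithin (γ i) (Icc 0 1) t * (γ i t - w)⁻¹) = 0)
    {z : ℂ} (hzD : z ∈ D) :
    ∑ i : Fin N, (∫ t in (0:ℝ)..1,
        derivWithin (γ i) (Icc 0 1) t * (g (γ i t) * (γ i t - z)⁻¹))
      = 2 * Real.pi * Complex.I * g z := by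
  classical
  set K : Set ℂ := closure D with hKdef
  have hKcl : IsClosed K := isClosed_closure
  have hKcpt : IsCompact K := Metric.isCompact_of_isClosed_isBounded hKcl hDb.closure
  have hKΩ : K ⊆ Ω := hDΩ
  have hγK : ∀ i, ∀ t ∈ Icc (0:ℝ) 1, γ i t ∈ K := fun i t ht => (hγ_mem i t ht).1
  have hγnD : ∀ i, ∀ t ∈ Icc (0:ℝ) 1, γ i t ∉ D := fun i t ht => (hγ_mem i t ht).2
  have hγΩ : ∀ i, ∀ t ∈ Icc (0:ℝ) 1, γ i t ∈ Ω := fun i t ht => hKΩ (hγK i t ht)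
  have hφc : ∀ i, ContinuousOn (derivWithin (γ i) (Icc 0 1)) (Icc 0 1) := fun i =>
    (hγ_smooth i).continuousOn_derivWithin (uniqueDiffOn_Icc zero_lt_one) le_rfl
  have hγc : ∀ i, ContinuousOn (γ i) (Icc 0 1) := fun i => (hγ_smooth i).continuousOn
  have hgγc : ∀ i, ContinuousOn (fun t => g (γ i t)) (Icc 0 1) := fun i =>
    hg.continuousOn.comp (hγc i) (hγΩ i)
  set A : ℂ → ℂ := fun w => ∑ i : Fin N,
    (∫ t in (0:ℝ)..1, derivWithin (γ i) (Icc 0 1) t * dslope g w (γ i t)) with hAdef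
  set B : ℂ → ℂ := fun w => ∑ i : Fin N,
    (∫ t in (0:ℝ)..1, derivWithin (γ i) (Icc 0 1) t * (g (γ i t) * (γ i t - w)⁻¹)) with hBdef
  -- expansion of A when w is off the curves
  have hexp : ∀ w : ℂ, (∀ i, ∀ t ∈ Icc (0:ℝ) 1, γ i t ≠ w) →
      A w = B w - g w * ∑ i : Fin N,
        (∫ t in (0:ℝ)..1, derivWithin (γ i) (Icc 0 1) t * (γ i t - w)⁻¹) := by
    intro w hw
    have hne' : ∀ i, ∀ t ∈ Icc (0:ℝ) 1, γ i t - w ≠ 0 := fun i t ht =>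
      sub_ne_zero.mpr (hw i t ht)
    have hint2 : ∀ i, IntervalIntegrable
        (fun t => derivWithin (γ i) (Icc 0 1) t * (g (γ i t) * (γ i t - w)⁻¹)) volume 0 1 := by
      intro i
      apply ContinuousOn.intervalIntegrable
      rw [uIcc_of_le zero_le_one]
      exact (hφc i).mul ((hgγc i).mul
        (((hγc i).sub continuousOn_const).inv₀ (hne' i)))
    have hint3 : ∀ i, IntervalIntegrable
        (fun t => g w * (derivWithin (γ i) (Icc 0 1) t * (γ i t - w)⁻¹)) volume 0 1 := by
      intro i
      apply ContinuousOn.intervalIntegrable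
      rw [uIcc_of_le zero_le_one]
      exact continuousOn_const.mul ((hφc i).mul
        (((hγc i).sub continuousOn_const).inv₀ (hne' i)))
    have hper : ∀ i, (∫ t in (0:ℝ)..1, derivWithin (γ i) (Icc 0 1) t * dslope g w (γ i t))
        = (∫ t in (0:ℝ)..1, derivWithin (γ i) (Icc 0 1) t * (g (γ i t) * (γ i t - w)⁻¹))
          - g w * (∫ t in (0:ℝ)..1, derivWithin (γ i) (Icc 0 1) t * (γ i t - w)⁻¹) := by
      intro i
      have h1 : (∫ t in (0:ℝ)..1, derivWithin (γ i) (Icc 0 1) t * dslope g w (γ i t))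
          = ∫ t in (0:ℝ)..1,
            (derivWithin (γ i) (Icc 0 1) t * (g (γ i t) * (γ i t - w)⁻¹)
              - g w * (derivWithin (γ i) (Icc 0 1) t * (γ i t - w)⁻¹)) := by
        apply intervalIntegral.integral_congr
        intro t ht
        rw [uIcc_of_le zero_le_one] at ht
        show derivWithin (γ i) (Icc 0 1) t * dslope g w (γ i t) = _
        rw [dslope_of_ne _ (hw i t ht), slope_def_field, div_eq_mul_inv]
        ring
      rw [h1, intervalIntegral.integral_sub (hint2 i) (hint3 i),
        intervalIntegral.integral_const_mul]
    rw [hAdef, hBdef]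
    simp only [hper]
    rw [Finset.sum_sub_distrib, ← Finset.mul_sum]
  have hAB : ∀ w, w ∉ K → A w = B w := by
    intro w hwK
    have hw : ∀ i, ∀ t ∈ Icc (0:ℝ) 1, γ i t ≠ w := by
      intro i t ht h
      exact hwK (h ▸ hγK i t ht)
    rw [hexp w hw, hwind_out w hwK, mul_zero, sub_zero]
  set G : ℂ → ℂ := fun w => if w ∈ Ω then A w else B w with hGdef
  have hGA : ∀ w ∈ Ω, G w = A w := fun w hw => if_pos hw
  have hGB : ∀ w, w ∉ K → G w = B w := by
    intro w hw
    by_cases hwΩ : w ∈ Ω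
    · rw [hGdef]; simp only [if_pos hwΩ]; exact hAB w hw
    · rw [hGdef]; simp only [if_neg hwΩ]
  have hGdiff : Differentiable ℂ G := by
    intro w
    by_cases hw : w ∈ Ω
    · have hin : ∀ i, ∃ d, HasDerivAt (fun w => ∫ t in (0:ℝ)..1,
            derivWithin (γ i) (Icc 0 1) t * dslope g w (γ i t)) d w :=
        fun i => inner_hasDerivAt hΩ hg hKcpt hKΩ (γ i) (hγ_smooth i) (hγK i) hw
      choose d hd using hin
      have hAd : HasDerivAt A (∑ i : Fin N, d i) w := by
        rw [hAdef]
        exact HasDerivAt.fun_sum (fun i _ => hd i)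
      have : HasDerivAt G (∑ i : Fin N, d i) w := by
        refine hAd.congr_of_eventuallyEq ?_
        filter_upwards [hΩ.mem_nhds hw] with u hu
        exact hGA u hu
      exact this.differentiableAt
    · have hwK : w ∉ K := fun h => hw (hKΩ h)
      have hout : ∀ i, ∃ d, HasDerivAt (fun w => ∫ t in (0:ℝ)..1,
            derivWithin (γ i) (Icc 0 1) t * (g (γ i t) * (γ i t - w)⁻¹)) d w :=
        fun i => outer_hasDerivAt hKcl g (γ i) (hγ_smooth i) (hγK i) (hgγc i) hwK
      choose d hd using hout
      have hBd : HasDerivAt B (∑ i : Fin N, d i) w := by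
        rw [hBdef]
        exact HasDerivAt.fun_sum (fun i _ => hd i)
      have : HasDerivAt G (∑ i : Fin N, d i) w := by
        refine hBd.congr_of_eventuallyEq ?_
        filter_upwards [hKcl.isOpen_compl.mem_nhds hwK] with u hu
        exact hGB u hu
      exact this.differentiableAt
  -- decay at infinity
  obtain ⟨R₀', hR₀'⟩ := hKcpt.isBounded.subset_closedBall 0
  set R₀ : ℝ := max R₀' 0 with hR₀def
  have hR₀ : K ⊆ closedBall 0 R₀ :=
    subset_trans hR₀' (closedBall_subset_closedBall (le_max_left _ _))
  have hR₀0 : 0 ≤ R₀ := le_max_right _ _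
  obtain ⟨Cφ, hCφ0, hCφ⟩ : ∃ C, 0 ≤ C ∧ ∀ i, ∀ t ∈ Icc (0:ℝ) 1,
      ‖derivWithin (γ i) (Icc 0 1) t‖ ≤ C := by
    choose C hC using fun i => isCompact_Icc.exists_bound_of_continuousOn (hφc i)
    rcases isEmpty_or_nonempty (Fin N) with h | h
    · exact ⟨0, le_refl _, fun i => absurd trivial (by exact h.elim i)⟩
    refine ⟨max (Finset.univ.sup' (by simp [Finset.univ_nonempty_iff.mpr h]) C) 0,
      le_max_right _ _, fun i t ht => ?_⟩
    exact le_trans (hC i t ht) (le_trans (Finset.le_sup' C (Finset.mem_univ i)) (le_max_left _ _))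
  obtain ⟨Cg, hCg0, hCg⟩ : ∃ C, 0 ≤ C ∧ ∀ i, ∀ t ∈ Icc (0:ℝ) 1, ‖g (γ i t)‖ ≤ C := by
    choose C hC using fun i => isCompact_Icc.exists_bound_of_continuousOn (hgγc i)
    rcases isEmpty_or_nonempty (Fin N) with h | h
    · exact ⟨0, le_refl _, fun i => absurd trivial (by exact h.elim i)⟩
    refine ⟨max (Finset.univ.sup' (by simp [Finset.univ_nonempty_iff.mpr h]) C) 0,
      le_max_right _ _, fun i t ht => ?_⟩
    exact le_trans (hC i t ht) (le_trans (Finset.le_sup' C (Finset.mem_univ i)) (le_max_left _ _))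
  have hGbound : ∀ w : ℂ, R₀ + 1 ≤ ‖w‖ → ‖G w‖ ≤ (N * (Cφ * Cg)) * (‖w‖ - R₀)⁻¹ := by
    intro w hwnorm
    have hwK : w ∉ K := by
      intro h
      have := mem_closedBall_zero_iff.mp (hR₀ h)
      linarith
    rw [hGB w hwK]
    have hiw : (0:ℝ) < ‖w‖ - R₀ := by linarith
    have hper : ∀ i, ‖∫ t in (0:ℝ)..1,
        derivWithin (γ i) (Icc 0 1) t * (g (γ i t) * (γ i t - w)⁻¹)‖
          ≤ Cφ * Cg * (‖w‖ - R₀)⁻¹ := by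
      intro i
      have hb : ∀ t ∈ Ι (0:ℝ) 1, ‖derivWithin (γ i) (Icc 0 1) t *
          (g (γ i t) * (γ i t - w)⁻¹)‖ ≤ Cφ * Cg * (‖w‖ - R₀)⁻¹ := by
        intro t ht
        rw [uIoc_of_le zero_le_one] at ht
        have ht' : t ∈ Icc (0:ℝ) 1 := Ioc_subset_Icc_self ht
        have hγb : ‖γ i t‖ ≤ R₀ := mem_closedBall_zero_iff.mp (hR₀ (hγK i t ht'))
        have hdist : ‖w‖ - R₀ ≤ ‖γ i t - w‖ := by
          have := norm_sub_norm_le w (γ i t)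
          rw [norm_sub_rev]
          linarith [norm_sub_norm_le w (γ i t)]
        have hinv : ‖(γ i t - w)⁻¹‖ ≤ (‖w‖ - R₀)⁻¹ := by
          rw [norm_inv]
          exact inv_anti₀ hiw hdist
        rw [norm_mul, norm_mul]
        calc ‖derivWithin (γ i) (Icc 0 1) t‖ * (‖g (γ i t)‖ * ‖(γ i t - w)⁻¹‖)
            ≤ Cφ * (Cg * (‖w‖ - R₀)⁻¹) := by
              apply mul_le_mul (hCφ i t ht') ?_ (by positivity) hCφ0
              exact mul_le_mul (hCg i t ht') hinv (norm_nonneg _) hCg0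
          _ = Cφ * Cg * (‖w‖ - R₀)⁻¹ := by ring
      calc ‖∫ t in (0:ℝ)..1, derivWithin (γ i) (Icc 0 1) t * (g (γ i t) * (γ i t - w)⁻¹)‖
          ≤ Cφ * Cg * (‖w‖ - R₀)⁻¹ * |1 - 0| :=
            intervalIntegral.norm_integral_le_of_norm_le_const hb
        _ = Cφ * Cg * (‖w‖ - R₀)⁻¹ := by norm_num
    calc ‖∑ i : Fin N, (∫ t in (0:ℝ)..1,
          derivWithin (γ i) (Icc 0 1) t * (g (γ i t) * (γ i t - w)⁻¹))‖
        ≤ ∑ i : Fin N, ‖∫ t in (0:ℝ)..1,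
          derivWithin (γ i) (Icc 0 1) t * (g (γ i t) * (γ i t - w)⁻¹)‖ := norm_sum_le _ _
      _ ≤ ∑ _i : Fin N, Cφ * Cg * (‖w‖ - R₀)⁻¹ := Finset.sum_le_sum (fun i _ => hper i)
      _ = (N * (Cφ * Cg)) * (‖w‖ - R₀)⁻¹ := by
          rw [Finset.sum_const, Finset.card_univ, Fintype.card_fin]
          simp [nsmul_eq_mul]; ring
  have hG0 : Tendsto G (Bornology.cobounded ℂ) (nhds 0) := by
    have h1 : Tendsto (fun w : ℂ => ‖w‖ - R₀) (Bornology.cobounded ℂ) atTop := by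
      have := tendsto_norm_cobounded_atTop (E := ℂ)
      exact tendsto_atTop_add_const_right _ (-R₀) this
    have h2 : Tendsto (fun w : ℂ => (N * (Cφ * Cg)) * (‖w‖ - R₀)⁻¹)
        (Bornology.cobounded ℂ) (nhds 0) := by
      have h3 := h1.inv_tendsto_atTop
      have h4 := h3.const_mul (N * (Cφ * Cg) : ℝ)
      simpa using h4
    apply squeeze_zero_norm' ?_ h2
    filter_upwards [eventually_cobounded_le_norm (R₀ + 1)] with w hw
    exact hGbound w hw
  have hGzero : ∀ w, G w = 0 := by
    intro w
    rw [cobounded_eq_cocompact] at hG0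
    exact hGdiff.apply_eq_of_tendsto_cocompact w hG0
  -- conclude
  have hzΩ : z ∈ Ω := hKΩ (subset_closure hzD)
  have hAz : A z = 0 := by rw [← hGA z hzΩ]; exact hGzero z
  have hwz : ∀ i, ∀ t ∈ Icc (0:ℝ) 1, γ i t ≠ z := by
    intro i t ht h
    exact hγnD i t ht (h ▸ hzD)
  have hthis := hexp z hwz
  rw [hAz, hwind_in z hzD] at hthis
  show B z = 2 * Real.pi * Complex.I * g z
  linear_combination -hthis

lemma tendsto_self_mul_inv_sub (a : ℂ) :
    Tendsto (fun ζ : ℂ => ζ * (ζ - a)⁻¹) (Bornology.cobounded ℂ) (nhds 1) := by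
  have hev : ∀ᶠ ζ : ℂ in Bornology.cobounded ℂ, ζ ≠ 0 ∧ ζ ≠ a := by
    filter_upwards [eventually_cobounded_le_norm (max ‖a‖ 0 + 1)] with ζ h
    constructor
    · intro h0; rw [h0, norm_zero] at h; linarith [le_max_right ‖a‖ (0:ℝ)]
    · intro h0; rw [h0] at h; linarith [le_max_left ‖a‖ (0:ℝ)]
  have h1 : Tendsto (fun ζ : ℂ => 1 - a * ζ⁻¹) (Bornology.cobounded ℂ) (nhds 1) := by
    have := (tendsto_inv₀_cobounded (α := ℂ)).const_mul a
    have h2 := (tendsto_const_nhds (x := (1:ℂ)) (f := Bornology.cobounded ℂ)).sub this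
    simpa using h2
  have h3 := h1.inv₀ (by norm_num)
  rw [show ((1:ℂ)⁻¹) = 1 by norm_num] at h3
  refine h3.congr' ?_
  filter_upwards [hev] with ζ ⟨h0, ha⟩
  have hζa : ζ - a ≠ 0 := sub_ne_zero.mpr ha
  field_simp

theorem principal_part_integral_zero
    {D : Set ℂ}
    {N : ℕ} {γ : Fin N → ℝ → ℂ}
    (hγ_smooth : ∀ i, ContDiffOn ℝ 1 (γ i) (Icc 0 1))
    (hγ_closed : ∀ i, γ i 0 = γ i 1)
    (hγ_mem : ∀ i, ∀ t ∈ Icc (0:ℝ) 1, γ i t ∈ closure D \ D)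
    (hwind_in : ∀ w ∈ D, ∑ i : Fin N,
      (∫ t in (0:ℝ)..1, derivWithin (γ i) (Icc 0 1) t * (γ i t - w)⁻¹)
        = 2 * Real.pi * Complex.I)
    (f₁ : ℂ → ℂ) (s : ℂ) (hs : s ∈ D)
    (hf₁ : DifferentiableOn ℂ f₁ {s}ᶜ)
    (hf₁0 : Tendsto f₁ (Bornology.cobounded ℂ) (nhds 0))
    (z : ℂ) (hz : z ∈ D) (hzs : z ≠ s) :
    ∑ i : Fin N, (∫ t in (0:ℝ)..1,
      derivWithin (γ i) (Icc 0 1) t * (f₁ (γ i t) * (γ i t - z)⁻¹)) = 0 := by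
  classical
  have hφc : ∀ i, ContinuousOn (derivWithin (γ i) (Icc 0 1)) (Icc 0 1) := fun i =>
    (hγ_smooth i).continuousOn_derivWithin (uniqueDiffOn_Icc zero_lt_one) le_rfl
  have hγc : ∀ i, ContinuousOn (γ i) (Icc 0 1) := fun i => (hγ_smooth i).continuousOn
  have hγnD : ∀ i, ∀ t ∈ Icc (0:ℝ) 1, γ i t ∉ D := fun i t ht => (hγ_mem i t ht).2
  have hγnz : ∀ i, ∀ t ∈ Icc (0:ℝ) 1, γ i t ≠ z := fun i t ht h =>
    hγnD i t ht (h ▸ hz)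
  have hγns : ∀ i, ∀ t ∈ Icc (0:ℝ) 1, γ i t ≠ s := fun i t ht h =>
    hγnD i t ht (h ▸ hs)
  set F : ℂ → ℂ := fun ζ => dslope f₁ z ζ + f₁ z * (ζ - s)⁻¹ with hFdef
  have hsc : ({s}ᶜ : Set ℂ) ∈ nhds z := isOpen_compl_singleton.mem_nhds hzs
  have hFdiff : DifferentiableOn ℂ F ({s}ᶜ : Set ℂ) := by
    apply DifferentiableOn.add
    · exact (Complex.differentiableOn_dslope hsc).mpr hf₁
    · exact ((differentiableOn_id.sub_const s).inv
        (fun ζ hζ => sub_ne_zero.mpr hζ)).const_mul (f₁ z)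
  have hdecay : Tendsto (fun ζ => ζ * F ζ) (Bornology.cobounded ℂ) (nhds 0) := by
    have h1 := tendsto_self_mul_inv_sub z
    have h2 := tendsto_self_mul_inv_sub s
    have h3 : Tendsto (fun ζ => f₁ ζ - f₁ z) (Bornology.cobounded ℂ) (nhds (0 - f₁ z)) :=
      hf₁0.sub tendsto_const_nhds
    have h4 := (h3.mul h1).add ((h2.const_mul (f₁ z)))
    have h5 : (0 - f₁ z) * 1 + f₁ z * 1 = 0 := by ring
    rw [h5] at h4
    refine h4.congr' ?_
    filter_upwards [eventually_cobounded_le_norm (max ‖z‖ ‖s‖ + 1)] with ζ h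
    have hζz : ζ ≠ z := by
      intro h0; rw [h0] at h; nlinarith [le_max_left ‖z‖ ‖s‖]
    have hζs : ζ ≠ s := by
      intro h0; rw [h0] at h; nlinarith [le_max_right ‖z‖ ‖s‖]
    show (f₁ ζ - f₁ z) * (ζ * (ζ - z)⁻¹) + f₁ z * (ζ * (ζ - s)⁻¹) = ζ * F ζ
    rw [hFdef]
    show _ = ζ * (dslope f₁ z ζ + f₁ z * (ζ - s)⁻¹)
    rw [dslope_of_ne _ hζz, slope_def_field, div_eq_mul_inv]
    ring
  obtain ⟨P, hP⟩ := decay_exists_primitive F s hFdiff hdecay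
  have hzero : ∀ i, (∫ t in (0:ℝ)..1, derivWithin (γ i) (Icc 0 1) t * F (γ i t)) = 0 := by
    intro i
    apply closed_curve_integral_eq_zero (γ i) (hγ_smooth i) (hγ_closed i)
      ({s}ᶜ : Set ℂ) isOpen_compl_singleton (fun t ht => hγns i t ht)
      F (hFdiff.continuousOn) P (fun ζ hζ => hP ζ hζ)
  -- split the integrals
  have hint1 : ∀ i, IntervalIntegrable
      (fun t => derivWithin (γ i) (Icc 0 1) t * (f₁ (γ i t) * (γ i t - z)⁻¹)) volume 0 1 := by
    intro i
    apply ContinuousOn.intervalIntegrable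
    rw [uIcc_of_le zero_le_one]
    refine (hφc i).mul (ContinuousOn.mul ?_
      (((hγc i).sub continuousOn_const).inv₀ (fun t ht => sub_ne_zero.mpr (hγnz i t ht))))
    exact (hf₁.continuousOn).comp (hγc i) (fun t ht => hγns i t ht)
  have hint2 : ∀ i, IntervalIntegrable
      (fun t => f₁ z * (derivWithin (γ i) (Icc 0 1) t * (γ i t - z)⁻¹)) volume 0 1 := by
    intro i
    apply ContinuousOn.intervalIntegrable
    rw [uIcc_of_le zero_le_one]
    exact continuousOn_const.mul ((hφc i).mul
      (((hγc i).sub continuousOn_const).inv₀ (fun t ht => sub_ne_zero.mpr (hγnz i t ht))))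
  have hint3 : ∀ i, IntervalIntegrable
      (fun t => f₁ z * (derivWithin (γ i) (Icc 0 1) t * (γ i t - s)⁻¹)) volume 0 1 := by
    intro i
    apply ContinuousOn.intervalIntegrable
    rw [uIcc_of_le zero_le_one]
    exact continuousOn_const.mul ((hφc i).mul
      (((hγc i).sub continuousOn_const).inv₀ (fun t ht => sub_ne_zero.mpr (hγns i t ht))))
  have hsplit : ∀ i, (∫ t in (0:ℝ)..1, derivWithin (γ i) (Icc 0 1) t * F (γ i t))
      = (∫ t in (0:ℝ)..1, derivWithin (γ i) (Icc 0 1) t * (f₁ (γ i t) * (γ i t - z)⁻¹))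
        - f₁ z * (∫ t in (0:ℝ)..1, derivWithin (γ i) (Icc 0 1) t * (γ i t - z)⁻¹)
        + f₁ z * (∫ t in (0:ℝ)..1, derivWithin (γ i) (Icc 0 1) t * (γ i t - s)⁻¹) := by
    intro i
    have h1 : (∫ t in (0:ℝ)..1, derivWithin (γ i) (Icc 0 1) t * F (γ i t))
        = ∫ t in (0:ℝ)..1,
          (derivWithin (γ i) (Icc 0 1) t * (f₁ (γ i t) * (γ i t - z)⁻¹)
            - f₁ z * (derivWithin (γ i) (Icc 0 1) t * (γ i t - z)⁻¹)
            + f₁ z * (derivWithin (γ i) (Icc 0 1) t * (γ i t - s)⁻¹)) := by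
      apply intervalIntegral.integral_congr
      intro t ht
      rw [uIcc_of_le zero_le_one] at ht
      show derivWithin (γ i) (Icc 0 1) t * F (γ i t) = _
      rw [hFdef]
      show derivWithin (γ i) (Icc 0 1) t * (dslope f₁ z (γ i t) + f₁ z * (γ i t - s)⁻¹) = _
      rw [dslope_of_ne _ (hγnz i t ht), slope_def_field, div_eq_mul_inv]
      ring
    rw [h1, intervalIntegral.integral_add ((hint1 i).sub (hint2 i)) (hint3 i),
      intervalIntegral.integral_sub (hint1 i) (hint2 i),
      intervalIntegral.integral_const_mul, intervalIntegral.integral_const_mul]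
  have hsum : (0:ℂ) = (∑ i : Fin N, (∫ t in (0:ℝ)..1,
      derivWithin (γ i) (Icc 0 1) t * (f₁ (γ i t) * (γ i t - z)⁻¹)))
      - f₁ z * (2 * Real.pi * Complex.I) + f₁ z * (2 * Real.pi * Complex.I) := by
    have h2 : (0:ℂ) = ∑ i : Fin N,
        (∫ t in (0:ℝ)..1, derivWithin (γ i) (Icc 0 1) t * F (γ i t)) := by
      rw [Finset.sum_congr rfl (fun i _ => hzero i)]
      simp
    rw [h2, Finset.sum_congr rfl (fun i _ => hsplit i)]
    rw [Finset.sum_add_distrib, Finset.sum_sub_distrib, ← Finset.mul_sum, ← Finset.mul_sum]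
    rw [hwind_in z hz, hwind_in s hs]
  linear_combination -hsum


lemma regular_part (Ω : Set ℂ) (hΩ : IsOpen Ω) (S : Finset ℂ)
    (f : ℂ → ℂ) (hf : DifferentiableOn ℂ f (Ω \ S))
    (fs : ℂ → ℂ → ℂ)
    (hfs_holo : ∀ s ∈ S, DifferentiableOn ℂ (fs s) {s}ᶜ)
    (hfs_princ : ∀ s ∈ S, ∃ U ∈ nhds s, ∃ h : ℂ → ℂ,
      DifferentiableOn ℂ h U ∧ ∀ w ∈ U \ {s}, h w = f w - fs s w) :
    ∃ g : ℂ → ℂ, DifferentiableOn ℂ g Ω ∧ ∀ w ∉ (S : Set ℂ), g w = f w - ∑ s ∈ S, fs s w := by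
  classical
  set q : ℂ → ℂ := fun w => f w - ∑ s ∈ S, fs s w with hqdef
  refine ⟨fun w => if w ∈ (S : Set ℂ) then limUnder (nhdsWithin w {w}ᶜ) q else q w, ?_, ?_⟩
  swap
  · intro w hw
    simp only [if_neg hw]
    rfl
  set g : ℂ → ℂ := fun w => if w ∈ (S : Set ℂ) then limUnder (nhdsWithin w {w}ᶜ) q else q w
    with hgdef
  have hSclosed : IsClosed (S : Set ℂ) := S.finite_toSet.isClosed
  have hq_diff : DifferentiableOn ℂ q (Ω \ S) := by
    apply hf.sub
    apply DifferentiableOn.fun_sum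
    intro s hs
    exact (hfs_holo s hs).mono (fun w hw => by
      simp only [mem_compl_iff, mem_singleton_iff]
      intro h
      exact hw.2 (by rw [h]; exact_mod_cast hs))
  intro w₀ hw₀
  by_cases hw₀S : w₀ ∈ (S : Set ℂ)
  · -- singular point: use the principal part decomposition
    obtain ⟨U, hUn, h, hhdiff, hheq⟩ := hfs_princ w₀ hw₀S
    set V : Set ℂ := interior U ∩ Ω ∩ (↑(S.erase w₀) : Set ℂ)ᶜ with hVdef
    have hVopen : IsOpen V :=
      (isOpen_interior.inter hΩ).inter (S.erase w₀).finite_toSet.isClosed.isOpen_compl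
    have hw₀V : w₀ ∈ V := by
      refine ⟨⟨mem_interior_iff_mem_nhds.mpr hUn, hw₀⟩, ?_⟩
      simp
    set H : ℂ → ℂ := fun w => h w - ∑ s ∈ S.erase w₀, fs s w with hHdef
    have hHdiff : DifferentiableOn ℂ H V := by
      apply DifferentiableOn.sub
      · exact hhdiff.mono (fun w hw => interior_subset hw.1.1)
      · apply DifferentiableOn.fun_sum
        intro s hs
        refine (hfs_holo s (Finset.mem_of_mem_erase hs)).mono (fun w hw => ?_)
        simp only [mem_compl_iff, mem_singleton_iff]
        intro heq
        exact hw.2 (by rw [heq]; exact_mod_cast hs)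
    have hqH : ∀ w ∈ V, w ≠ w₀ → q w = H w := by
      intro w hwV hww₀
      have hwS : w ∉ (S : Set ℂ) := by
        intro hwS
        apply hwV.2
        have : w ∈ S.erase w₀ := Finset.mem_erase.mpr ⟨hww₀, by exact_mod_cast hwS⟩
        exact_mod_cast this
      have hsum : ∑ s ∈ S, fs s w = fs w₀ w + ∑ s ∈ S.erase w₀, fs s w :=
        (Finset.add_sum_erase S (fun s => fs s w) (by exact_mod_cast hw₀S)).symm
      have hh : h w = f w - fs w₀ w :=
        hheq w ⟨interior_subset hwV.1.1, by simpa using hww₀⟩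
      rw [hqdef]
      show f w - ∑ s ∈ S, fs s w = H w
      rw [hsum, hHdef]
      show _ = h w - ∑ s ∈ S.erase w₀, fs s w
      rw [hh]
      ring
    have hgH : ∀ w ∈ V, g w = H w := by
      intro w hwV
      by_cases hww₀ : w = w₀
      · subst hww₀
        rw [hgdef]
        simp only [if_pos hw₀S]
        have hHcont : Tendsto H (nhdsWithin w {w}ᶜ) (nhds (H w)) :=
          ((hHdiff.differentiableAt (hVopen.mem_nhds hwV)).continuousAt).continuousWithinAt
        have hqtend : Tendsto q (nhdsWithin w {w}ᶜ) (nhds (H w)) := by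
          refine hHcont.congr' ?_
          have hmem : V \ {w} ∈ nhdsWithin w {w}ᶜ :=
            mem_nhdsWithin.mpr ⟨V, hVopen, hwV, fun u hu => ⟨hu.1, hu.2⟩⟩
          filter_upwards [hmem] with u hu
          exact (hqH u hu.1 (by simpa using hu.2)).symm
        exact hqtend.limUnder_eq
      · rw [hgdef]
        have hwS : w ∉ (S : Set ℂ) := by
          intro hwS
          apply hwV.2
          have : w ∈ S.erase w₀ := Finset.mem_erase.mpr ⟨hww₀, by exact_mod_cast hwS⟩
          exact_mod_cast this
        simp only [if_neg hwS]
        exact hqH w hwV hww₀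
    have hHd : DifferentiableAt ℂ H w₀ := hHdiff.differentiableAt (hVopen.mem_nhds hw₀V)
    have : DifferentiableAt ℂ g w₀ := by
      refine hHd.congr_of_eventuallyEq ?_
      filter_upwards [hVopen.mem_nhds hw₀V] with u hu
      exact hgH u hu
    exact this.differentiableWithinAt
  · -- regular point
    have hmem : Ω \ S ∈ nhds w₀ :=
      (hΩ.sdiff hSclosed).mem_nhds ⟨hw₀, hw₀S⟩
    have hqd : DifferentiableAt ℂ q w₀ := hq_diff.differentiableAt hmem
    have : DifferentiableAt ℂ g w₀ := by
      refine hqd.congr_of_eventuallyEq ?_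
      filter_upwards [hmem] with u hu
      rw [hgdef]
      simp only [if_neg hu.2]
    exact this.differentiableWithinAt

set_option maxHeartbeats 1000000 in
theorem boundary_integral_gives_regular_part
    (Ω : Set ℂ) (hΩ : IsOpen Ω) (S : Finset ℂ) (hS : (S : Set ℂ) ⊆ Ω)
    (f : ℂ → ℂ) (hf : DifferentiableOn ℂ f (Ω \ S))
    (fs : ℂ → ℂ → ℂ)
    -- for each `s ∈ S`, `fs s` is the principal part of the Laurent series of `f` at `s`:
    (hfs_holo : ∀ s ∈ S, DifferentiableOn ℂ (fs s) {s}ᶜ)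
    (hfs_zero : ∀ s ∈ S, Tendsto (fs s) (Bornology.cobounded ℂ) (nhds 0))
    (hfs_princ : ∀ s ∈ S, ∃ U ∈ nhds s, ∃ h : ℂ → ℂ,
      DifferentiableOn ℂ h U ∧ ∀ w ∈ U \ {s}, h w = f w - fs s w)
    -- a bounded open set `D` with `S ∪ {z} ⊆ D` and `closure D ⊆ Ω`
    (z : ℂ) (hz : z ∈ Ω \ S)
    (D : Set ℂ) (hD : IsOpen D) (hDb : Bornology.IsBounded D)
    (hDΩ : closure D ⊆ Ω) (hSD : (S : Set ℂ) ⊆ D) (hzD : z ∈ D)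
    -- the boundary of `D` is parametrized by finitely many closed `C¹` curves …
    (N : ℕ) (γ : Fin N → ℝ → ℂ)
    (hγ_smooth : ∀ i, ContDiffOn ℝ 1 (γ i) (Set.Icc 0 1))
    (hγ_closed : ∀ i, γ i 0 = γ i 1)
    (hγ_image : (⋃ i, γ i '' Set.Icc (0:ℝ) 1) = frontier D)
    -- … oriented so that `D` lies to the left: the total winding number is `1` around
    -- points of `D` and `0` around points outside `closure D`
    (hwind_in : ∀ w ∈ D,
      ∑ i : Fin N, (∫ t in (0:ℝ)..1, deriv (γ i) t / (γ i t - w)) =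
        2 * Real.pi * Complex.I)
    (hwind_out : ∀ w ∉ closure D,
      ∑ i : Fin N, (∫ t in (0:ℝ)..1, deriv (γ i) t / (γ i t - w)) = 0) :
    (1 / (2 * Real.pi * Complex.I)) *
        ∑ i : Fin N, (∫ t in (0:ℝ)..1, deriv (γ i) t * f (γ i t) / (γ i t - z)) =
      f z - ∑ s ∈ S, fs s z := by
  classical
  have hzΩ : z ∈ Ω := hz.1
  have hzS : z ∉ (S : Set ℂ) := hz.2
  have hγmem : ∀ i, ∀ t ∈ Set.Icc (0:ℝ) 1, γ i t ∈ closure D \ D := by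
    intro i t ht
    have h1 : γ i t ∈ frontier D := by
      rw [← hγ_image]
      exact Set.mem_iUnion.mpr ⟨i, Set.mem_image_of_mem _ ht⟩
    rwa [hD.frontier_eq] at h1
  have hγΩ : ∀ i, ∀ t ∈ Set.Icc (0:ℝ) 1, γ i t ∈ Ω := fun i t ht =>
    hDΩ (hγmem i t ht).1
  have hγnS : ∀ i, ∀ t ∈ Set.Icc (0:ℝ) 1, γ i t ∉ (S : Set ℂ) := fun i t ht h =>
    (hγmem i t ht).2 (hSD h)
  have hγnz : ∀ i, ∀ t ∈ Set.Icc (0:ℝ) 1, γ i t ≠ z := fun i t ht h =>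
    (hγmem i t ht).2 (h ▸ hzD)
  have hφc : ∀ i, ContinuousOn (derivWithin (γ i) (Icc 0 1)) (Icc 0 1) := fun i =>
    (hγ_smooth i).continuousOn_derivWithin (uniqueDiffOn_Icc zero_lt_one) le_rfl
  have hγc : ∀ i, ContinuousOn (γ i) (Icc 0 1) := fun i => (hγ_smooth i).continuousOn
  -- a.e. identification of `deriv` with `derivWithin`
  have hderiv_ae : ∀ i, ∀ᵐ t : ℝ ∂(volume : Measure ℝ), t ∈ Set.uIoc (0:ℝ) 1 →
      deriv (γ i) t = derivWithin (γ i) (Set.Icc 0 1) t := by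
    intro i
    have h1 : ∀ᵐ t : ℝ ∂(volume : Measure ℝ), t ≠ 1 := by
      rw [ae_iff]
      have : {t : ℝ | ¬t ≠ 1} = {1} := by ext t; simp
      rw [this]
      exact Real.volume_singleton
    filter_upwards [h1] with t ht1 htI
    rw [Set.uIoc_of_le zero_le_one] at htI
    have hIoo : t ∈ Set.Ioo (0:ℝ) 1 := ⟨htI.1, lt_of_le_of_ne htI.2 ht1⟩
    exact (derivWithin_of_mem_nhds (Icc_mem_nhds hIoo.1 hIoo.2)).symm
  have hwind_conv : ∀ (i : Fin N) (w : ℂ),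
      (∫ t in (0:ℝ)..1, deriv (γ i) t / (γ i t - w))
        = ∫ t in (0:ℝ)..1, derivWithin (γ i) (Icc 0 1) t * (γ i t - w)⁻¹ := by
    intro i w
    apply intervalIntegral.integral_congr_ae
    filter_upwards [hderiv_ae i] with t h ht
    rw [div_eq_mul_inv, h ht]
  have hwind_in' : ∀ w ∈ D, ∑ i : Fin N,
      (∫ t in (0:ℝ)..1, derivWithin (γ i) (Icc 0 1) t * (γ i t - w)⁻¹)
        = 2 * Real.pi * Complex.I := by
    intro w hw
    rw [← hwind_in w hw]
    exact Finset.sum_congr rfl (fun i _ => (hwind_conv i w).symm)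
  have hwind_out' : ∀ w ∉ closure D, ∑ i : Fin N,
      (∫ t in (0:ℝ)..1, derivWithin (γ i) (Icc 0 1) t * (γ i t - w)⁻¹) = 0 := by
    intro w hw
    rw [← hwind_out w hw]
    exact Finset.sum_congr rfl (fun i _ => (hwind_conv i w).symm)
  obtain ⟨g, hgdiff, hgeq⟩ := regular_part Ω hΩ S f hf fs hfs_holo hfs_princ
  have hdix := dixon_formula hΩ hgdiff hDb hDΩ hγ_smooth hγmem hwind_in' hwind_out' hzD
  have hpp : ∀ s ∈ S, ∑ i : Fin N, (∫ t in (0:ℝ)..1,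
      derivWithin (γ i) (Icc 0 1) t * (fs s (γ i t) * (γ i t - z)⁻¹)) = 0 := by
    intro s hs
    refine principal_part_integral_zero hγ_smooth hγ_closed hγmem hwind_in'
      (fs s) s (hSD hs) (hfs_holo s hs) (hfs_zero s hs) z hzD ?_
    intro h
    exact hzS (by rw [h]; exact_mod_cast hs)
  -- integrability facts
  have hinv_cont : ∀ i, ContinuousOn (fun t => (γ i t - z)⁻¹) (Icc 0 1) := fun i =>
    ((hγc i).sub continuousOn_const).inv₀
      (fun t ht => sub_ne_zero.mpr (hγnz i t ht))
  have hint_g : ∀ i, IntervalIntegrable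
      (fun t => derivWithin (γ i) (Icc 0 1) t * (g (γ i t) * (γ i t - z)⁻¹)) volume 0 1 := by
    intro i
    apply ContinuousOn.intervalIntegrable
    rw [uIcc_of_le zero_le_one]
    exact (hφc i).mul ((hgdiff.continuousOn.comp (hγc i) (hγΩ i)).mul (hinv_cont i))
  have hint_fs : ∀ i, ∀ s ∈ S, IntervalIntegrable
      (fun t => derivWithin (γ i) (Icc 0 1) t * (fs s (γ i t) * (γ i t - z)⁻¹)) volume 0 1 := by
    intro i s hs
    apply ContinuousOn.intervalIntegrable
    rw [uIcc_of_le zero_le_one]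
    refine (hφc i).mul (ContinuousOn.mul ?_ (hinv_cont i))
    refine ((hfs_holo s hs).continuousOn).comp (hγc i) (fun t ht => ?_)
    intro h
    exact (hγmem i t ht).2 (by rw [Set.mem_singleton_iff] at h; rw [h]; exact hSD hs)
  have hcurve_decomp : ∀ i, (∫ t in (0:ℝ)..1, deriv (γ i) t * f (γ i t) / (γ i t - z))
      = (∫ t in (0:ℝ)..1, derivWithin (γ i) (Icc 0 1) t * (g (γ i t) * (γ i t - z)⁻¹))
        + ∑ s ∈ S, (∫ t in (0:ℝ)..1,
            derivWithin (γ i) (Icc 0 1) t * (fs s (γ i t) * (γ i t - z)⁻¹)) := by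
    intro i
    have h1 : (∫ t in (0:ℝ)..1, deriv (γ i) t * f (γ i t) / (γ i t - z))
        = ∫ t in (0:ℝ)..1,
            (derivWithin (γ i) (Icc 0 1) t * (g (γ i t) * (γ i t - z)⁻¹)
              + ∑ s ∈ S, derivWithin (γ i) (Icc 0 1) t * (fs s (γ i t) * (γ i t - z)⁻¹)) := by
      apply intervalIntegral.integral_congr_ae
      filter_upwards [hderiv_ae i] with t hd ht
      have ht' : t ∈ Icc (0:ℝ) 1 := by
        rw [Set.uIoc_of_le zero_le_one] at ht
        exact Ioc_subset_Icc_self ht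
      have hfw : f (γ i t) = g (γ i t) + ∑ s ∈ S, fs s (γ i t) := by
        have := hgeq (γ i t) (hγnS i t ht')
        linear_combination -this
      rw [hd ht, div_eq_mul_inv, hfw]
      rw [← Finset.mul_sum, ← Finset.sum_mul]
      ring
    have hintsum : IntervalIntegrable (fun t => ∑ s ∈ S,
        derivWithin (γ i) (Icc 0 1) t * (fs s (γ i t) * (γ i t - z)⁻¹)) volume 0 1 := by
      have h := IntervalIntegrable.sum S (fun s (hs : s ∈ S) => hint_fs i s hs)
      have heq : (fun t => ∑ s ∈ S, derivWithin (γ i) (Icc 0 1) t * (fs s (γ i t) * (γ i t - z)⁻¹))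
          = ∑ s ∈ S, (fun t => derivWithin (γ i) (Icc 0 1) t * (fs s (γ i t) * (γ i t - z)⁻¹)) := by
        funext t
        simp
      rw [heq]
      exact h
    rw [h1, intervalIntegral.integral_add (hint_g i) hintsum,
      intervalIntegral.integral_finset_sum (fun s (hs : s ∈ S) => hint_fs i s hs)]
  have h2 : ∑ i : Fin N, (∫ t in (0:ℝ)..1, deriv (γ i) t * f (γ i t) / (γ i t - z))
      = (∑ i : Fin N, (∫ t in (0:ℝ)..1,
          derivWithin (γ i) (Icc 0 1) t * (g (γ i t) * (γ i t - z)⁻¹)))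
        + ∑ i : Fin N, ∑ s ∈ S, (∫ t in (0:ℝ)..1,
            derivWithin (γ i) (Icc 0 1) t * (fs s (γ i t) * (γ i t - z)⁻¹)) := by
    rw [Finset.sum_congr rfl (fun i _ => hcurve_decomp i)]
    exact Finset.sum_add_distrib
  have h3 : ∑ i : Fin N, ∑ s ∈ S, (∫ t in (0:ℝ)..1,
        derivWithin (γ i) (Icc 0 1) t * (fs s (γ i t) * (γ i t - z)⁻¹))
      = ∑ s ∈ S, ∑ i : Fin N, (∫ t in (0:ℝ)..1,
        derivWithin (γ i) (Icc 0 1) t * (fs s (γ i t) * (γ i t - z)⁻¹)) :=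
    Finset.sum_comm
  have h4 : ∑ s ∈ S, ∑ i : Fin N, (∫ t in (0:ℝ)..1,
      derivWithin (γ i) (Icc 0 1) t * (fs s (γ i t) * (γ i t - z)⁻¹)) = 0 := by
    rw [Finset.sum_congr rfl (fun s hs => hpp s hs)]
    exact Finset.sum_const_zero
  have h2πi : (2 * (Real.pi : ℂ) * Complex.I) ≠ 0 := by
    simp [Real.pi_ne_zero, Complex.I_ne_zero]
  rw [h2, hdix, h3, h4, add_zero, ← hgeq z hzS, one_div, inv_mul_cancel_left₀ h2πi]
end

section
/- (Boundary principle, ℂ-valued, finite dimensional) Let Ω ⊂ ℂⁿ be a bounded open set and f : closure(Ω) → ℂ continuous with f holomorphic on Ω. Then f(closure(Ω)) = f(∂Ω). In particular sup_{x∈Ω} |f(x)| = sup_{x∈∂Ω} |f(x)|. -/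
open Complex Set Metric Bornology

private lemma sumNormSq_pos {n : ℕ} {x : Fin n → ℂ} (hx : x ≠ 0) :
    0 < ∑ i, Complex.normSq (x i) := by
  obtain ⟨i, hi⟩ := Function.ne_iff.mp hx
  exact Finset.sum_pos' (fun j _ => Complex.normSq_nonneg _)
    ⟨i, Finset.mem_univ i, by simpa using Complex.normSq_pos.mpr hi⟩

private lemma sumNormSq_add {n : ℕ} (a b : Fin n → ℂ) (t : ℂ) :
    ∑ i, Complex.normSq ((a + t • b) i) =
      ∑ i, Complex.normSq (a i) + Complex.normSq t * ∑ i, Complex.normSq (b i)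
        + 2 * ((starRingEnd ℂ) t * ∑ i, a i * (starRingEnd ℂ) (b i)).re := by
  have h : ∀ i : Fin n, Complex.normSq ((a + t • b) i) =
      Complex.normSq (a i) + Complex.normSq t * Complex.normSq (b i) +
        2 * ((starRingEnd ℂ) t * (a i * (starRingEnd ℂ) (b i))).re := by
    intro i
    simp only [Pi.add_apply, Pi.smul_apply, smul_eq_mul]
    rw [Complex.normSq_add, Complex.normSq_mul]
    congr 2
    rw [map_mul]
    ring_nf
  rw [Finset.sum_congr rfl (fun i _ => h i)]
  rw [Finset.sum_add_distrib, Finset.sum_add_distrib, ← Finset.mul_sum, ← Finset.mul_sum]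
  congr 1
  simp [Finset.mul_sum, Complex.re_sum]

private lemma exists_orth {n : ℕ} (hn : 2 ≤ n) (u : Fin n → ℂ) (hu : u ≠ 0) :
    ∃ e : Fin n → ℂ, e ≠ 0 ∧ ∑ i, u i * (starRingEnd ℂ) (e i) = 0 := by
  obtain ⟨i, hi⟩ := Function.ne_iff.mp hu
  have h0 : (0 : ℕ) < n := by omega
  have h1 : (1 : ℕ) < n := by omega
  set k : Fin n := if i = ⟨0, h0⟩ then ⟨1, h1⟩ else ⟨0, h0⟩ with hkdef
  have hki : k ≠ i := by
    rcases eq_or_ne i ⟨0, h0⟩ with h | h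
    · rw [hkdef, if_pos h, h]
      simp [Fin.ext_iff]
    · rw [hkdef, if_neg h]
      exact fun hc => h hc.symm
  refine ⟨fun j => if j = k then (starRingEnd ℂ) (u i) else
    if j = i then -((starRingEnd ℂ) (u k)) else 0, ?_, ?_⟩
  · intro h
    have := congrFun h k
    simp only [if_pos rfl, Pi.zero_apply, map_eq_zero] at this
    exact hi (by simpa using this)
  · have hsub : ({k, i} : Finset (Fin n)) ⊆ Finset.univ := Finset.subset_univ _
    rw [← Finset.sum_subset hsub]
    · rw [Finset.sum_pair hki]
      simp [hki.symm, Complex.conj_conj]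
      ring
    · intro j _ hj
      simp only [Finset.mem_insert, Finset.mem_singleton, not_or] at hj
      simp [hj.1, hj.2]

open Complex Set Metric Bornology

theorem boundary_principle (n : ℕ) (hn : 2 ≤ n)
    (Ω : Set (Fin n → ℂ)) (hΩ : IsOpen Ω) (hΩb : Bornology.IsBounded Ω)
    (f : (Fin n → ℂ) → ℂ) (hfc : ContinuousOn f (closure Ω))
    (hf : DifferentiableOn ℂ f Ω) :
    f '' closure Ω = f '' frontier Ω ∧
      sSup ((fun x => ‖f x‖) '' Ω) = sSup ((fun x => ‖f x‖) '' frontier Ω) := by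
  have himg : f '' closure Ω = f '' frontier Ω := by
    refine Subset.antisymm ?_ (Set.image_mono frontier_subset_closure)
    rintro w ⟨z, hz, rfl⟩
    by_contra hw
    set N : (Fin n → ℂ) → ℝ := fun x => ∑ i, Complex.normSq (x i) with hNdef
    have hNc : Continuous N :=
      continuous_finset_sum _ fun i _ => Complex.continuous_normSq.comp (continuous_apply i)
    set Z : Set (Fin n → ℂ) := closure Ω ∩ f ⁻¹' {f z} with hZdef
    have hZclosed : IsClosed Z :=
      hfc.preimage_isClosed_of_isClosed isClosed_closure isClosed_singleton
    have hZsub : Z ⊆ Ω := by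
      rintro x ⟨hx1, hx2⟩
      by_contra hxΩ
      have hxf : x ∈ frontier Ω := by
        rw [frontier, hΩ.interior_eq]
        exact ⟨hx1, hxΩ⟩
      exact hw ⟨x, hxf, hx2⟩
    have hZcpt : IsCompact Z :=
      Metric.isCompact_of_isClosed_isBounded hZclosed
        (hΩb.closure.subset inter_subset_left)
    obtain ⟨p, hpZ, hpmax⟩ := hZcpt.exists_isMaxOn ⟨z, hz, rfl⟩ hNc.continuousOn
    -- choose u and e
    have h0n : (0:ℕ) < n := by omega
    set u : Fin n → ℂ := if p = 0 then (fun j => if j = ⟨0, h0n⟩ then 1 else 0) else p with hudef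
    have hu0 : u ≠ 0 := by
      by_cases hp : p = 0
      · rw [hudef, if_pos hp]
        intro h
        have := congrFun h ⟨0, h0n⟩
        simp at this
      · rwa [hudef, if_neg hp]
    obtain ⟨e, he0, hue⟩ := exists_orth hn u hu0
    have hpe : ∑ i, p i * (starRingEnd ℂ) (e i) = 0 := by
      by_cases hp : p = 0
      · simp [hp]
      · rwa [hudef, if_neg hp] at hue
    have hpu_re : 0 ≤ (∑ i, p i * (starRingEnd ℂ) (u i)).re := by
      by_cases hp : p = 0
      · simp [hp]
      · rw [hudef, if_neg hp]
        have : ∑ i, p i * (starRingEnd ℂ) (p i) = ((∑ i, Complex.normSq (p i) : ℝ) : ℂ) := by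
          push_cast
          exact Finset.sum_congr rfl fun i _ => Complex.mul_conj _
        rw [this, Complex.ofReal_re]
        exact Finset.sum_nonneg fun i _ => Complex.normSq_nonneg _
    have hNu : 0 < ∑ i, Complex.normSq (u i) := sumNormSq_pos hu0
    have hNe : 0 < ∑ i, Complex.normSq (e i) := sumNormSq_pos he0
    -- ball around p inside Ω
    obtain ⟨δ, hδpos, hδΩ⟩ := Metric.isOpen_iff.mp hΩ p (hZsub hpZ)
    set r : ℝ := δ / (3 * (‖e‖ + 1)) with hrdef
    set s₀ : ℝ := δ / (3 * (‖u‖ + 1)) with hs₀def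
    have hrpos : 0 < r := by positivity
    have hs₀pos : 0 < s₀ := by positivity
    have hmem : ∀ s ∈ Set.Icc (0:ℝ) s₀, ∀ t ∈ closedBall (0:ℂ) r,
        p + (s:ℂ) • u + t • e ∈ ball p δ := by
      intro s hs t ht
      rw [mem_ball, dist_eq_norm]
      have heq : p + (s:ℂ) • u + t • e - p = (s:ℂ) • u + t • e := by abel
      rw [heq]
      have h1 : ‖(s:ℂ) • u‖ ≤ δ / 3 := by
        rw [norm_smul, Complex.norm_real, Real.norm_eq_abs, _root_.abs_of_nonneg hs.1]
        calc s * ‖u‖ ≤ s₀ * (‖u‖ + 1) := by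
              have hnu : (0:ℝ) ≤ ‖u‖ := norm_nonneg _
              nlinarith [hs.2, hs.1]
          _ = δ / 3 := by
              have hpos : (0:ℝ) < ‖u‖ + 1 := by positivity
              rw [hs₀def]
              field_simp
      have h2 : ‖t • e‖ ≤ δ / 3 := by
        rw [norm_smul]
        have htle : ‖t‖ ≤ r := by simpa [dist_eq_norm] using ht
        calc ‖t‖ * ‖e‖ ≤ r * (‖e‖ + 1) := by
              have hne : (0:ℝ) ≤ ‖e‖ := norm_nonneg _
              nlinarith [htle, hrpos.le]
          _ = δ / 3 := by
              have hpos : (0:ℝ) < ‖e‖ + 1 := by positivity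
              rw [hrdef]
              field_simp
      calc ‖(s:ℂ) • u + t • e‖ ≤ ‖(s:ℂ) • u‖ + ‖t • e‖ := norm_add_le _ _
        _ ≤ δ / 3 + δ / 3 := add_le_add h1 h2
        _ < δ := by linarith
    -- G
    set G : ℝ × ℂ → ℂ := fun q => f (p + (q.1:ℂ) • u + q.2 • e) - f z with hGdef
    set K : Set (ℝ × ℂ) := Set.Icc (0:ℝ) s₀ ×ˢ closedBall (0:ℂ) r with hKdef
    have hKcpt : IsCompact K := isCompact_Icc.prod (isCompact_closedBall _ _)
    have hmapcont : Continuous (fun q : ℝ × ℂ => p + (q.1:ℂ) • u + q.2 • e) :=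
      (continuous_const.add ((Complex.continuous_ofReal.comp continuous_fst).smul
        continuous_const)).add (continuous_snd.smul continuous_const)
    have hGcont : ContinuousOn G K := by
      apply ContinuousOn.sub _ continuousOn_const
      apply hfc.comp hmapcont.continuousOn
      intro q hq
      exact subset_closure (hδΩ (hmem q.1 hq.1 q.2 hq.2))
    -- points in fiber have N ≤ N p
    have hfiber : ∀ x ∈ ball p δ, f x = f z → N x ≤ N p :=
      fun x hx hfx => hpmax ⟨subset_closure (hδΩ hx), hfx⟩
    -- G (0, t) ≠ 0 on sphere
    have hsph : ∀ t : ℂ, t ∈ sphere (0:ℂ) r → G (0, t) ≠ 0 := by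
      intro t ht h0
      have htn : ‖t‖ = r := by simpa [dist_eq_norm] using ht
      have hmemb : p + ((0:ℝ):ℂ) • u + t • e ∈ ball p δ :=
        hmem 0 ⟨le_refl _, hs₀pos.le⟩ t (sphere_subset_closedBall ht)
      have heq : p + ((0:ℝ):ℂ) • u + t • e = p + t • e := by
        simp
      rw [heq] at hmemb
      have hfx : f (p + t • e) = f z := by
        rw [hGdef] at h0
        simp only at h0
        rw [heq] at h0
        exact sub_eq_zero.mp h0
      have hle := hfiber _ hmemb hfx
      rw [hNdef] at hle
      simp only at hle
      rw [sumNormSq_add p e t, hpe] at hle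
      have hnst : Complex.normSq t = r ^ 2 := by
        rw [← htn, Complex.sq_norm]
      rw [hnst] at hle
      simp only [mul_zero, Complex.zero_re] at hle
      nlinarith [mul_pos (pow_pos hrpos 2) hNe]
    -- min on sphere
    have hGsphcont : ContinuousOn (fun t : ℂ => ‖G (0, t)‖) (sphere (0:ℂ) r) := by
      apply ContinuousOn.norm
      apply hGcont.comp (Continuous.continuousOn (continuous_const.prodMk continuous_id))
      intro t ht
      exact ⟨⟨le_refl _, hs₀pos.le⟩, sphere_subset_closedBall ht⟩
    obtain ⟨t1, ht1, hmin⟩ := (isCompact_sphere (0:ℂ) r).exists_isMinOn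
      (NormedSpace.sphere_nonempty.mpr hrpos.le) hGsphcont
    set m : ℝ := ‖G (0, t1)‖ with hmdef
    have hmpos : 0 < m := norm_pos_iff.mpr (hsph t1 ht1)
    -- uniform continuity
    have hUC := hKcpt.uniformContinuousOn_of_continuous hGcont
    rw [Metric.uniformContinuousOn_iff] at hUC
    obtain ⟨η, hηpos, hη⟩ := hUC (m/2) (by positivity)
    set s : ℝ := min s₀ (η/2) with hsdef
    have hspos : 0 < s := lt_min hs₀pos (by positivity)
    have hss₀ : s ≤ s₀ := min_le_left _ _
    have hsη : s < η := lt_of_le_of_lt (min_le_right _ _) (by linarith)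
    have hsmem : s ∈ Set.Icc (0:ℝ) s₀ := ⟨hspos.le, hss₀⟩
    have hdist : ∀ t ∈ closedBall (0:ℂ) r, dist (G (s, t)) (G (0, t)) < m / 2 := by
      intro t ht
      apply hη (s, t) ⟨hsmem, ht⟩ (0, t) ⟨⟨le_refl _, hs₀pos.le⟩, ht⟩
      rw [Prod.dist_eq]
      simp only [dist_self, Real.dist_eq, sub_zero, abs_of_pos hspos]
      exact max_lt hsη hηpos
    have hcirc : ∀ t ∈ sphere (0:ℂ) r, m / 2 ≤ ‖G (s, t)‖ := by
      intro t ht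
      have h1 := hdist t (sphere_subset_closedBall ht)
      have h2 : m ≤ ‖G (0, t)‖ := hmin ht
      have h3 : ‖G (0, t)‖ - ‖G (s, t)‖ ≤ dist (G (s, t)) (G (0, t)) := by
        rw [dist_comm, dist_eq_norm]
        exact norm_sub_norm_le _ _
      linarith
    have hcent : ‖G (s, 0)‖ < m / 2 := by
      have h1 := hdist 0 (mem_closedBall_self hrpos.le)
      have h2 : G (0, 0) = 0 := by
        rw [hGdef]
        simp only
        have : p + ((0:ℝ):ℂ) • u + (0:ℂ) • e = p := by simp
        rw [this]
        exact sub_eq_zero.mpr hpZ.2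
      rwa [h2, dist_zero_right] at h1
    -- zero exists
    have hzero : ∃ t ∈ closedBall (0:ℂ) r, G (s, t) = 0 := by
      by_contra hcon
      push_neg at hcon
      have hGs0 : G (s, 0) ≠ 0 := hcon 0 (mem_closedBall_self hrpos.le)
      set g : ℂ → ℂ := fun t => (G (s, t))⁻¹ with hgdef
      have hφd : DifferentiableOn ℂ (fun t : ℂ => f (p + (s:ℂ) • u + t • e)) (ball 0 r) := by
        apply hf.comp
        · exact ((differentiable_id.smul_const e).const_add _).differentiableOn
        · intro t ht
          exact hδΩ (hmem s hsmem t (ball_subset_closedBall ht))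
      have hφc : ContinuousOn (fun t : ℂ => f (p + (s:ℂ) • u + t • e)) (closedBall 0 r) := by
        apply hfc.comp (Continuous.continuousOn
          (continuous_const.add (continuous_id.smul continuous_const)))
        intro t ht
        exact subset_closure (hδΩ (hmem s hsmem t ht))
      have hgd : DiffContOnCl ℂ g (ball (0:ℂ) r) := by
        constructor
        · apply DifferentiableOn.inv
          · exact hφd.sub_const _
          · intro t ht
            exact hcon t (ball_subset_closedBall ht)
        · rw [closure_ball (0:ℂ) hrpos.ne']
          apply ContinuousOn.inv₀
          · exact hφc.sub continuousOn_const
          · exact hcon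
      have hbound : ∀ t ∈ frontier (ball (0:ℂ) r), ‖g t‖ ≤ (m/2)⁻¹ := by
        intro t ht
        rw [frontier_ball (0:ℂ) hrpos.ne'] at ht
        rw [hgdef]
        simp only [norm_inv]
        exact inv_anti₀ (by positivity) (hcirc t ht)
      have h0cl : (0:ℂ) ∈ closure (ball (0:ℂ) r) := by
        rw [closure_ball (0:ℂ) hrpos.ne']
        exact mem_closedBall_self hrpos.le
      have := Complex.norm_le_of_forall_mem_frontier_norm_le isBounded_ball hgd hbound h0cl
      rw [hgdef] at this
      simp only [norm_inv] at this
      have hlt : (m/2)⁻¹ < ‖G (s, 0)‖⁻¹ := by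
        apply inv_strictAnti₀ (norm_pos_iff.mpr hGs0) hcent
      linarith
    obtain ⟨t₀, ht₀, hG0⟩ := hzero
    set q : Fin n → ℂ := p + (s:ℂ) • u + t₀ • e with hqdef
    have hqΩ : q ∈ ball p δ := hmem s hsmem t₀ ht₀
    have hfq : f q = f z := by
      rw [hGdef] at hG0
      exact sub_eq_zero.mp hG0
    have hle := hfiber q hqΩ hfq
    -- compute N q
    have hcross : ∑ i, (p + (s:ℂ) • u) i * (starRingEnd ℂ) (e i) = 0 := by
      have : ∀ i : Fin n, (p + (s:ℂ) • u) i * (starRingEnd ℂ) (e i)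
          = p i * (starRingEnd ℂ) (e i) + (s:ℂ) * (u i * (starRingEnd ℂ) (e i)) := by
        intro i
        simp only [Pi.add_apply, Pi.smul_apply, smul_eq_mul]
        ring
      rw [Finset.sum_congr rfl fun i _ => this i, Finset.sum_add_distrib, hpe,
        ← Finset.mul_sum, hue]
      simp
    have hNq : N q = N (p + (s:ℂ) • u) + Complex.normSq t₀ * ∑ i, Complex.normSq (e i) := by
      rw [hNdef, hqdef]
      simp only
      rw [sumNormSq_add (p + (s:ℂ) • u) e t₀, hcross]
      simp
    have hNpsu : N (p + (s:ℂ) • u) = N p + s^2 * (∑ i, Complex.normSq (u i))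
        + 2 * (s * (∑ i, p i * (starRingEnd ℂ) (u i)).re) := by
      rw [hNdef]
      simp only
      rw [sumNormSq_add p u ((s:ℂ))]
      congr 1
      · congr 1
        rw [Complex.normSq_ofReal]
        ring
      · rw [Complex.conj_ofReal, Complex.re_ofReal_mul]
    rw [hNq, hNpsu] at hle
    have hnst₀ : 0 ≤ Complex.normSq t₀ := Complex.normSq_nonneg _
    nlinarith [mul_pos (pow_pos hspos 2) hNu, mul_nonneg hspos.le hpu_re,
      mul_nonneg hnst₀ hNe.le]
  refine ⟨himg, ?_⟩
  rcases Set.eq_empty_or_nonempty Ω with hne | hne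
  · rw [hne]
    simp
  · have hnorm : (fun x => ‖f x‖) = (fun y : ℂ => ‖y‖) ∘ f := rfl
    have himg2 : (fun x => ‖f x‖) '' frontier Ω = (fun x => ‖f x‖) '' closure Ω := by
      rw [hnorm, Set.image_comp, Set.image_comp, himg]
    rw [himg2]
    have hccl : IsCompact (closure Ω) := hΩb.isCompact_closure
    have hbdd : BddAbove ((fun x => ‖f x‖) '' closure Ω) :=
      (hccl.image_of_continuousOn hfc.norm).bddAbove
    have hbddΩ : BddAbove ((fun x => ‖f x‖) '' Ω) :=
      hbdd.mono (Set.image_mono subset_closure)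
    apply le_antisymm
    · exact csSup_le_csSup hbdd (hne.image _) (Set.image_mono subset_closure)
    · apply csSup_le ((hne.closure).image _)
      rintro y ⟨x, hx, rfl⟩
      have hsub : (fun x => ‖f x‖) '' closure Ω ⊆ closure ((fun x => ‖f x‖) '' Ω) :=
        (hfc.norm).image_closure
      have hmem : ‖f x‖ ∈ closure ((fun x => ‖f x‖) '' Ω) := hsub ⟨x, hx, rfl⟩
      have hIic : closure ((fun x => ‖f x‖) '' Ω) ⊆ Set.Iic (sSup ((fun x => ‖f x‖) '' Ω)) :=
        closure_minimal (fun y hy => le_csSup hbddΩ hy) isClosed_Iic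
      exact hIic hmem
end

section
/- Let n ≥ 2, let Ω ⊂ ℂⁿ be open, K ⊂ Ω compact, a ∈ Ω, u ∈ ℂⁿ \ {0}, and let G ⊂ ℂ be a bounded open set with 0 ∈ G, a + cl(G)·u ⊂ Ω, and K ∩ (a + ℂ·u) ⊂ a + G·u. Then the set Ω_{G,u} := {x ∈ Ω : x + cl(G)·u ⊂ Ω and K ∩ (x + ℂ·u) ⊂ x + G·u} is an open neighborhood of a in ℂⁿ, and Ω_{G,u} + ∂G·u ⊂ Ω \ K. -/
open Metric

theorem admissible_slice_set_open (n : ℕ) (hn : 2 ≤ n)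
    (Ω K : Set (Fin n → ℂ)) (hΩ : IsOpen Ω) (hK : IsCompact K) (hKΩ : K ⊆ Ω)
    (a : Fin n → ℂ) (ha : a ∈ Ω) (u : Fin n → ℂ) (hu : u ≠ 0)
    (G : Set ℂ) (hG : IsOpen G) (hGb : Bornology.IsBounded G) (h0G : (0 : ℂ) ∈ G)
    (haG : ∀ z ∈ closure G, a + z • u ∈ Ω)
    (haK : ∀ z : ℂ, a + z • u ∈ K → z ∈ G) :
    IsOpen {x | x ∈ Ω ∧ (∀ z ∈ closure G, x + z • u ∈ Ω) ∧
        ∀ z : ℂ, x + z • u ∈ K → z ∈ G} ∧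
      a ∈ {x | x ∈ Ω ∧ (∀ z ∈ closure G, x + z • u ∈ Ω) ∧
        ∀ z : ℂ, x + z • u ∈ K → z ∈ G} ∧
      ∀ x ∈ {x | x ∈ Ω ∧ (∀ z ∈ closure G, x + z • u ∈ Ω) ∧
        ∀ z : ℂ, x + z • u ∈ K → z ∈ G},
        ∀ z ∈ frontier G, x + z • u ∈ Ω \ K := by
  have hcG : IsCompact (closure G) := hGb.isCompact_closure
  have hunorm : 0 < ‖u‖ := norm_pos_iff.mpr hu
  refine ⟨?_, ⟨ha, haG, haK⟩, ?_⟩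
  · rw [Metric.isOpen_iff]
    rintro x₀ ⟨hx₀Ω, hx₀G, hx₀K⟩
    -- δ₁ : radius ensuring the Ω-condition
    obtain ⟨δ₁, hδ₁pos, hδ₁⟩ :
        ∃ δ > 0, ∀ x, dist x x₀ < δ → ∀ z ∈ closure G, x + z • u ∈ Ω := by
      rcases Set.eq_empty_or_nonempty Ωᶜ with hc | hc
      · exact ⟨1, one_pos, fun x _ z _ => by
          by_contra h
          exact absurd (Set.eq_empty_iff_forall_notMem.mp hc (x + z • u)) (by simpa using h)⟩
      · have hf : Continuous fun z : ℂ => infDist (x₀ + z • u) Ωᶜ :=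
          (continuous_infDist_pt _).comp (continuous_const.add (continuous_id.smul continuous_const))
        obtain ⟨z₀, hz₀, hmin⟩ :=
          hcG.exists_isMinOn ⟨0, subset_closure h0G⟩ hf.continuousOn
        refine ⟨infDist (x₀ + z₀ • u) Ωᶜ, ?_, ?_⟩
        · exact (hΩ.isClosed_compl.notMem_iff_infDist_pos hc).mp
            (by simpa using hx₀G z₀ hz₀)
        · intro x hx z hz
          by_contra h
          have h1 : infDist (x₀ + z • u) Ωᶜ ≤ dist x x₀ := by
            calc infDist (x₀ + z • u) Ωᶜ ≤ dist (x₀ + z • u) (x + z • u) :=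
                  infDist_le_dist_of_mem (by simpa using h)
              _ = dist x₀ x := dist_add_right x₀ x (z • u)
              _ = dist x x₀ := dist_comm _ _
          exact absurd (lt_of_le_of_lt h1 hx) (not_lt.mpr (hmin hz))
    -- δ₂ : radius ensuring the K-condition
    obtain ⟨δ₂, hδ₂pos, hδ₂⟩ :
        ∃ δ > 0, ∀ x, dist x x₀ < δ → ∀ z : ℂ, x + z • u ∈ K → z ∈ G := by
      rcases Set.eq_empty_or_nonempty K with hKe | hKne
      · exact ⟨1, one_pos, fun x _ z hz => absurd hz (by simp [hKe])⟩
      obtain ⟨R, hR⟩ := hK.isBounded.subset_closedBall 0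
      set M : ℝ := (R + (‖x₀‖ + 1)) / ‖u‖ with hM
      have key : ∀ x, dist x x₀ < 1 → ∀ z : ℂ, x + z • u ∈ K → ‖z‖ ≤ M := by
        intro x hx z hzK
        have hxn : ‖x‖ < ‖x₀‖ + 1 := by
          calc ‖x‖ ≤ ‖x₀‖ + dist x x₀ := by
                rw [dist_eq_norm]
                have := norm_add_le (x - x₀) x₀
                simpa [sub_add_cancel, add_comm] using this
            _ < ‖x₀‖ + 1 := by linarith
        have h1 : ‖z • u‖ ≤ R + (‖x₀‖ + 1) := by
          have : z • u = (x + z • u) - x := by abel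
          rw [this]
          calc ‖(x + z • u) - x‖ ≤ ‖x + z • u‖ + ‖x‖ := norm_sub_le _ _
            _ ≤ R + (‖x₀‖ + 1) := by
                have hk : ‖x + z • u‖ ≤ R := by
                  simpa using mem_closedBall_zero_iff.mp (hR hzK)
                linarith
        rw [norm_smul] at h1
        rw [hM, le_div_iff₀ hunorm]
        exact h1
      set E : Set ℂ := closedBall (0 : ℂ) M ∩ Gᶜ with hE
      have hEc : IsCompact E := (isCompact_closedBall _ _).inter_right hG.isClosed_compl
      rcases Set.eq_empty_or_nonempty E with hEe | hEne
      · refine ⟨1, one_pos, fun x hx z hzK => ?_⟩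
        by_contra hzG
        exact Set.eq_empty_iff_forall_notMem.mp hEe z
          ⟨mem_closedBall_zero_iff.mpr (key x hx z hzK), hzG⟩
      · have hf : Continuous fun z : ℂ => infDist (x₀ + z • u) K :=
          (continuous_infDist_pt _).comp (continuous_const.add (continuous_id.smul continuous_const))
        obtain ⟨z₀, hz₀E, hmin⟩ := hEc.exists_isMinOn hEne hf.continuousOn
        have hpos : 0 < infDist (x₀ + z₀ • u) K := by
          refine (hK.isClosed.notMem_iff_infDist_pos hKne).mp fun hmem => ?_
          exact hz₀E.2 (hx₀K z₀ hmem)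
        refine ⟨min (infDist (x₀ + z₀ • u) K) 1, lt_min hpos one_pos, ?_⟩
        intro x hx z hzK
        by_contra hzG
        have hx1 : dist x x₀ < 1 := lt_of_lt_of_le hx (min_le_right _ _)
        have hzE : z ∈ E := ⟨mem_closedBall_zero_iff.mpr (key x hx1 z hzK), hzG⟩
        have h1 : infDist (x₀ + z • u) K ≤ dist x x₀ := by
          calc infDist (x₀ + z • u) K ≤ dist (x₀ + z • u) (x + z • u) :=
                infDist_le_dist_of_mem hzK
            _ = dist x₀ x := dist_add_right x₀ x (z • u)
            _ = dist x x₀ := dist_comm _ _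
        have h2 : dist x x₀ < infDist (x₀ + z₀ • u) K :=
          lt_of_lt_of_le hx (min_le_left _ _)
        exact absurd (lt_of_le_of_lt h1 h2) (not_lt.mpr (hmin hzE))
    refine ⟨min δ₁ δ₂, lt_min hδ₁pos hδ₂pos, ?_⟩
    intro x hx
    have hx1 : dist x x₀ < δ₁ := lt_of_lt_of_le hx (min_le_left _ _)
    have hx2 : dist x x₀ < δ₂ := lt_of_lt_of_le hx (min_le_right _ _)
    refine ⟨?_, fun z hz => hδ₁ x hx1 z hz, fun z hz => hδ₂ x hx2 z hz⟩
    have := hδ₁ x hx1 0 (subset_closure h0G)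
    simpa using this
  · rintro x ⟨hxΩ, hxG, hxK⟩ z hz
    refine ⟨hxG z (frontier_subset_closure hz), fun hmem => ?_⟩
    have : z ∈ G := hxK z hmem
    rw [hG.frontier_eq] at hz
    exact hz.2 this
end

section
/- Let Ω ⊂ ℂⁿ be open (n ≥ 2), K ⊂ Ω compact with Ω \ K connected, D ⊂ ℂ open, g : D → ℂ holomorphic, and f : Ω \ K → ℂ holomorphic with f(Ω \ K) ⊆ D. Let f̃ : Ω → ℂ be the holomorphic extension of f (which exists by Hartogs). Then f̃(Ω) ⊆ D and the extension of g ∘ f equals g ∘ f̃. -/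
open Metric Set Filter

variable {E : Type*} [NormedAddCommGroup E] [NormedSpace ℂ E]

/-- One-variable-based propagation: if `h` is holomorphic on a ball and vanishes on a
subball, it vanishes on the whole ball. -/
lemma eqOn_zero_ball_of_eqOn_zero_subball {h : E → ℂ} {z : E} {ε : ℝ}
    (hd : DifferentiableOn ℂ h (ball z ε)) {a : E} {ρ : ℝ} (hρ : 0 < ρ)
    (hsub : ball a ρ ⊆ ball z ε) (h0 : EqOn h 0 (ball a ρ)) : EqOn h 0 (ball z ε) := by
  have ha : a ∈ ball z ε := hsub (mem_ball_self hρ)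
  intro x hx
  by_cases hxa : x = a
  · exact hxa ▸ h0 (mem_ball_self hρ)
  set d : E := x - a with hd'
  have hdne : d ≠ 0 := sub_ne_zero.mpr hxa
  set m : ℂ → E := fun t => a + t • d with hm
  have hmc : Continuous m := continuous_const.add (continuous_id.smul continuous_const)
  set U : Set ℂ := m ⁻¹' (ball z ε) with hU
  have hUopen : IsOpen U := isOpen_ball.preimage hmc
  have hUconv : Convex ℝ U := by
    intro t₁ h₁ t₂ h₂ θ₁ θ₂ hθ₁ hθ₂ hθ
    have hθ₂' : θ₂ = 1 - θ₁ := by linarith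
    subst hθ₂'
    have key : m (θ₁ • t₁ + (1 - θ₁) • t₂) = θ₁ • m t₁ + (1 - θ₁) • m t₂ := by
      simp only [hm, smul_add, add_smul, smul_assoc]
      nth_rewrite 1 [← Convex.combo_self hθ a]
      abel
    have := (convex_ball z ε) h₁ h₂ hθ₁ hθ₂ hθ
    rw [hU, mem_preimage, key]
    exact this
  have h0U : (0 : ℂ) ∈ U := by simpa [hU, hm] using ha
  have hm1 : m 1 = x := by simp only [hm, one_smul, hd']; abel
  have h1U : (1 : ℂ) ∈ U := by rw [hU, mem_preimage, hm1]; exact hx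
  have hφd : DifferentiableOn ℂ (h ∘ m) U := by
    refine hd.comp ?_ (fun t ht => ht)
    exact fun t ht => ((differentiable_id.smul_const d).const_add a).differentiableAt.differentiableWithinAt
  have hφa : AnalyticOnNhd ℂ (h ∘ m) U := hφd.analyticOnNhd hUopen
  have hev : (h ∘ m) =ᶠ[nhds (0 : ℂ)] 0 := by
    have hρd : 0 < ρ / ‖d‖ := div_pos hρ (norm_pos_iff.mpr hdne)
    filter_upwards [ball_mem_nhds (0 : ℂ) hρd] with t ht
    have : m t ∈ ball a ρ := by
      simp only [hm, mem_ball, dist_eq_norm, add_sub_cancel_left, norm_smul]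
      calc ‖t‖ * ‖d‖ < (ρ / ‖d‖) * ‖d‖ := by
            apply mul_lt_mul_of_pos_right _ (norm_pos_iff.mpr hdne)
            simpa [dist_eq_norm] using ht
        _ = ρ := div_mul_cancel₀ _ (norm_ne_zero_iff.mpr hdne)
    exact h0 this
  have := hφa.eqOn_zero_of_preconnected_of_eventuallyEq_zero hUconv.isPreconnected h0U hev
  have h1 := this h1U
  simpa [hm1] using h1

/-- Identity theorem: a holomorphic function on an open preconnected set vanishing near a point
vanishes everywhere. -/
lemma eqOn_zero_of_preconnected_of_eventuallyEq_zero' {h : E → ℂ} {Ω : Set E}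
    (hΩ : IsOpen Ω) (hconn : IsPreconnected Ω) (hd : DifferentiableOn ℂ h Ω)
    {z₀ : E} (hz₀ : z₀ ∈ Ω) (hev : ∀ᶠ x in nhds z₀, h x = 0) : EqOn h 0 Ω := by
  set A : Set E := {z | ∃ ε > 0, ball z ε ⊆ Ω ∧ EqOn h 0 (ball z ε)} with hA
  have hAopen : IsOpen A := by
    refine isOpen_iff_forall_mem_open.mpr ?_
    rintro z ⟨ε, hε, hballΩ, hz⟩
    refine ⟨ball z ε, fun y hy => ?_, isOpen_ball, mem_ball_self hε⟩
    have hsub2 : ball y (ε - dist y z) ⊆ ball z ε := ball_subset_ball' (by linarith)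
    exact ⟨ε - dist y z, by simpa [sub_pos] using hy, hsub2.trans hballΩ, fun w hw => hz (hsub2 hw)⟩
  have hclos : Ω ∩ closure A ⊆ A := by
    rintro z ⟨hzΩ, hzcl⟩
    obtain ⟨ε, hε, hball⟩ := Metric.isOpen_iff.mp hΩ z hzΩ
    obtain ⟨a, haA, hadist⟩ : ∃ a ∈ A, dist a z < ε / 2 := by
      obtain ⟨a, haA, hd'⟩ := Metric.mem_closure_iff.mp hzcl (ε / 2) (by linarith)
      exact ⟨a, haA, by rwa [dist_comm]⟩
    obtain ⟨ρ, hρ, hρΩ, hρ0⟩ := haA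
    have hρ' : 0 < min ρ (ε / 2) := lt_min hρ (by linarith)
    have hsub : ball a (min ρ (ε / 2)) ⊆ ball z ε := by
      intro w hw
      rw [mem_ball] at hw ⊢
      calc dist w z ≤ dist w a + dist a z := dist_triangle _ _ _
        _ < ε / 2 + ε / 2 := add_lt_add (lt_of_lt_of_le hw (min_le_right _ _)) hadist
        _ = ε := by ring
    have h0' : EqOn h 0 (ball a (min ρ (ε / 2))) :=
      fun w hw => hρ0 (ball_subset_ball (min_le_left _ _) hw)
    exact ⟨ε, hε, hball, eqOn_zero_ball_of_eqOn_zero_subball (hd.mono hball) hρ' hsub h0'⟩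
  have hz₀A : z₀ ∈ A := by
    obtain ⟨ε₁, hε₁, hball₁⟩ := Metric.isOpen_iff.mp hΩ z₀ hz₀
    obtain ⟨ε₂, hε₂, hball₂⟩ := Metric.eventually_nhds_iff_ball.mp hev
    refine ⟨min ε₁ ε₂, lt_min hε₁ hε₂, (ball_subset_ball (min_le_left _ _)).trans hball₁, ?_⟩
    exact fun w hw => hball₂ w (ball_subset_ball (min_le_right _ _) hw)
  intro x hxΩ
  show h x = 0
  by_contra hhx
  have hxnA : x ∉ closure A := by
    intro hxcl
    obtain ⟨ε, hε, _, heq⟩ := hclos ⟨hxΩ, hxcl⟩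
    exact hhx (heq (mem_ball_self hε))
  have hcover : Ω ⊆ A ∪ (closure A)ᶜ := by
    intro z hz
    by_cases hzc : z ∈ closure A
    · exact Or.inl (hclos ⟨hz, hzc⟩)
    · exact Or.inr hzc
  obtain ⟨w, _, hwA, hwn⟩ := hconn A (closure A)ᶜ hAopen isClosed_closure.isOpen_compl
    hcover ⟨z₀, hz₀, hz₀A⟩ ⟨x, hxΩ, hxnA⟩
  exact hwn (subset_closure hwA)

lemma pi_single_norm_le {n : ℕ} (i : Fin n) (t : ℂ) : ‖t • (Pi.single i 1 : Fin n → ℂ)‖ ≤ ‖t‖ := by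
  have h1 : ‖(Pi.single i 1 : Fin n → ℂ)‖ ≤ 1 := by
    refine (pi_norm_le_iff_of_nonneg zero_le_one).mpr fun j => ?_
    by_cases hj : j = i
    · subst hj; simp
    · simp [Pi.single_eq_of_ne hj]
  calc ‖t • (Pi.single i 1 : Fin n → ℂ)‖ = ‖t‖ * ‖(Pi.single i 1 : Fin n → ℂ)‖ := norm_smul _ _
    _ ≤ ‖t‖ * 1 := mul_le_mul_of_nonneg_left h1 (norm_nonneg t)
    _ = ‖t‖ := mul_one _

set_option maxHeartbeats 1000000 in
lemma excision {n : ℕ} (hn : 2 ≤ n) {Ω K : Set (Fin n → ℂ)} (hΩ : IsOpen Ω)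
    (hK : IsCompact K) (hKΩ : K ⊆ Ω) {ψ : (Fin n → ℂ) → ℂ}
    (hψ : DifferentiableOn ℂ ψ Ω) (hne : ∀ z ∈ Ω \ K, ψ z ≠ 0) :
    ∀ z ∈ Ω, ψ z ≠ 0 := by
  by_contra hcon
  push_neg at hcon
  obtain ⟨z₁, hz₁Ω, hz₁⟩ := hcon
  set S : Set (Fin n → ℂ) := {z | z ∈ Ω ∧ ψ z = 0} with hS
  have hSK : S ⊆ K := fun z hz => by_contra fun hzK => hne z ⟨hz.1, hzK⟩ hz.2
  have hScl : IsClosed S := by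
    rw [← closure_subset_iff_isClosed]
    intro z hz
    have hzK : z ∈ K := hK.isClosed.closure_subset (closure_mono hSK hz)
    have hzΩ : z ∈ Ω := hKΩ hzK
    have hcont : ContinuousAt ψ z := (hψ.differentiableAt (hΩ.mem_nhds hzΩ)).continuousAt
    have h1 : ψ z ∈ closure (ψ '' S) := mem_closure_image hcont hz
    have h2 : ψ '' S ⊆ {0} := by rintro _ ⟨w, hw, rfl⟩; exact hw.2
    have h3 : ψ z ∈ ({0} : Set ℂ) := by
      have := closure_mono h2 h1
      rwa [closure_singleton] at this
    exact ⟨hzΩ, h3⟩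
  have hScomp : IsCompact S := hK.of_isClosed_subset hScl hSK
  have hSne : S.Nonempty := ⟨z₁, hz₁Ω, hz₁⟩
  set i0 : Fin n := ⟨0, by omega⟩ with hi0def
  set i1 : Fin n := ⟨1, by omega⟩ with hi1def
  have hi01 : i0 ≠ i1 := by simp [hi0def, hi1def, Fin.ext_iff]
  set ℓ : (Fin n → ℂ) → ℝ := fun z => (z i0).re with hℓ
  have hℓcont : Continuous ℓ := Complex.continuous_re.comp (continuous_apply i0)
  obtain ⟨p, hpS, hpmax⟩ := hScomp.exists_isMaxOn hSne hℓcont.continuousOn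
  have hpΩ : p ∈ Ω := hpS.1
  obtain ⟨ε₀, hε₀, hball⟩ := Metric.isOpen_iff.mp hΩ p hpΩ
  set ε : ℝ := ε₀ / 2 with hεdef
  have hε : 0 < ε := by positivity
  set u : Fin n → ℂ := Pi.single i0 1 with hu
  set v : Fin n → ℂ := Pi.single i1 1 with hv
  set m : ℂ → (Fin n → ℂ) := fun t => p + t • v with hm
  have hmc : Continuous m := continuous_const.add (continuous_id.smul continuous_const)
  set O : Set ℂ := m ⁻¹' Ω with hO
  have hOopen : IsOpen O := hΩ.preimage hmc
  have h0O : (0 : ℂ) ∈ O := by simp [hO, hm, hpΩ]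
  set φ : ℂ → ℂ := fun t => ψ (m t) with hφ
  have hmdiff : Differentiable ℂ m := (differentiable_id.smul_const v).const_add p
  have hφd : DifferentiableOn ℂ φ O :=
    hψ.comp hmdiff.differentiableOn (fun t ht => ht)
  have hφ0 : φ 0 = 0 := by
    have : m 0 = p := by simp [hm]
    simp [hφ, this, hpS.2]
  -- φ is not eventually zero near 0
  have hnotev : ¬ (∀ᶠ t in nhds (0:ℂ), φ t = 0) := by
    intro hev
    set C : Set ℂ := connectedComponentIn O 0 with hC
    have hCopen : IsOpen C := hOopen.connectedComponentIn
    have h0C : (0:ℂ) ∈ C := mem_connectedComponentIn h0O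
    have hCsub : C ⊆ O := connectedComponentIn_subset O 0
    have hCconn : IsPreconnected C := isPreconnected_connectedComponentIn
    have hCzero : EqOn φ 0 C :=
      eqOn_zero_of_preconnected_of_eventuallyEq_zero' hCopen hCconn (hφd.mono hCsub) h0C hev
    have hCS : ∀ t ∈ C, m t ∈ S := fun t ht => ⟨hCsub ht, hCzero ht⟩
    obtain ⟨R, hR⟩ := hK.isBounded.subset_closedBall 0
    have hCbd : ∀ t ∈ C, ‖t‖ ≤ R + ‖p‖ := by
      intro t ht
      have hmem : m t ∈ K := hSK (hCS t ht)
      have h1 : ‖m t‖ ≤ R := by simpa [dist_eq_norm] using hR hmem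
      have h2 : ‖t‖ = ‖(m t - p) i1‖ := by simp [hm, hv, Pi.single_eq_same]
      calc ‖t‖ = ‖(m t - p) i1‖ := h2
        _ ≤ ‖m t - p‖ := norm_le_pi_norm _ i1
        _ ≤ ‖m t‖ + ‖p‖ := norm_sub_le _ _
        _ ≤ R + ‖p‖ := by linarith
    have hCnotclosed : ¬ IsClosed C := by
      intro hcl
      have huniv : C = univ := by
        rcases isClopen_iff.mp ⟨hcl, hCopen⟩ with h | h
        · exact absurd (h ▸ h0C) (Set.notMem_empty _)
        · exact h
      have hb := hCbd ((|R| + ‖p‖ + 1 : ℝ) : ℂ) (huniv ▸ mem_univ _)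
      simp only [Complex.norm_real, Real.norm_eq_abs] at hb
      rw [abs_of_nonneg (by positivity)] at hb
      have := le_abs_self R
      linarith
    obtain ⟨t₀, ht₀cl, ht₀C⟩ : ∃ t₀, t₀ ∈ closure C ∧ t₀ ∉ C := by
      by_contra h'
      push_neg at h'
      exact hCnotclosed (closure_subset_iff_isClosed.mp (fun t ht => h' t ht))
    have hmt₀S : m t₀ ∈ S := by
      have h1 : m t₀ ∈ closure (m '' C) := mem_closure_image hmc.continuousAt ht₀cl
      have h2 : m '' C ⊆ S := by rintro _ ⟨t, ht, rfl⟩; exact hCS t ht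
      exact hScl.closure_subset (closure_mono h2 h1)
    have ht₀O : t₀ ∈ O := mem_preimage.mpr hmt₀S.1
    have hpre : IsPreconnected (C ∪ {t₀}) :=
      hCconn.subset_closure subset_union_left
        (union_subset subset_closure (by simpa using ht₀cl))
    have hsub : C ∪ {t₀} ⊆ O := union_subset hCsub (by simpa using ht₀O)
    have := hpre.subset_connectedComponentIn (Or.inl h0C) hsub
    exact ht₀C (this (Or.inr rfl))
  have hφan : AnalyticAt ℂ φ 0 := (hφd.analyticOnNhd hOopen) 0 h0O
  rcases hφan.eventually_eq_zero_or_eventually_ne_zero with hev | hev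
  · exact hnotev hev
  rw [eventually_nhdsWithin_iff] at hev
  obtain ⟨r₁, hr₁, hball₁⟩ := Metric.eventually_nhds_iff_ball.mp hev
  set r : ℝ := min (r₁ / 2) (ε / 2) with hrdef
  have hr : 0 < r := lt_min (by linarith) (by linarith)
  have hrε : r ≤ ε / 2 := min_le_right _ _
  have hrr₁ : r < r₁ := lt_of_le_of_lt (min_le_left _ _) (by linarith)
  -- points of the closed bidisc are in Ω
  have hQΩ : ∀ s t : ℂ, ‖s‖ ≤ ε / 2 → ‖t‖ ≤ ε / 2 → p + s • u + t • v ∈ Ω := by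
    intro s t hs ht
    apply hball
    rw [mem_ball, dist_eq_norm]
    have : p + s • u + t • v - p = s • u + t • v := by abel
    rw [this]
    calc ‖s • u + t • v‖ ≤ ‖s • u‖ + ‖t • v‖ := norm_add_le _ _
      _ ≤ ‖s‖ + ‖t‖ := add_le_add (pi_single_norm_le i0 s) (pi_single_norm_le i1 t)
      _ ≤ ε / 2 + ε / 2 := add_le_add hs ht
      _ = ε := by ring
      _ < ε₀ := by rw [hεdef]; linarith
  -- minimum of ‖φ‖ on the sphere of radius r
  have hsne : (sphere (0:ℂ) r).Nonempty := NormedSpace.sphere_nonempty.mpr hr.le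
  have hφcont : ContinuousOn (fun t => ‖φ t‖) (sphere (0:ℂ) r) := by
    intro t ht
    have htΩ : m t ∈ Ω := by
      have h0 : ‖t‖ = r := by simpa [mem_sphere_iff_norm] using ht
      have := hQΩ 0 t (by simp; linarith) (by rw [h0]; exact hrε)
      simpa [hm] using this
    exact (((hψ.differentiableAt (hΩ.mem_nhds htΩ)).continuousAt.comp
      hmc.continuousAt).norm).continuousWithinAt
  obtain ⟨tc, htc, hmin⟩ := (isCompact_sphere (0:ℂ) r).exists_isMinOn hsne hφcont
  set c : ℝ := ‖φ tc‖ with hc'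
  have hc : 0 < c := by
    have htcr : ‖tc‖ = r := by simpa [mem_sphere_iff_norm] using htc
    have h1 : φ tc ≠ 0 := by
      apply hball₁ tc
      · rw [mem_ball, dist_zero_right, htcr]; exact hrr₁
      · simp only [mem_compl_iff, mem_singleton_iff]
        intro h0
        rw [h0, norm_zero] at htcr
        exact absurd htcr.symm hr.ne'
    exact norm_pos_iff.mpr h1
  -- eventual facts in s near 0
  have hev1 : ∀ᶠ s in nhds (0:ℂ), ∀ t ∈ sphere (0:ℂ) r, c / 2 ≤ ‖ψ (p + s • u + t • v)‖ := by
    apply (isCompact_sphere (0:ℂ) r).eventually_forall_of_forall_eventually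
    intro t ht
    have htr : ‖t‖ = r := by simpa [mem_sphere_iff_norm] using ht
    have htΩ : p + (0:ℂ) • u + t • v ∈ Ω := hQΩ 0 t (by simp; linarith) (by rw [htr]; exact hrε)
    have hQc : Continuous (fun z : ℂ × ℂ => p + z.1 • u + z.2 • v) :=
      (continuous_const.add (continuous_fst.smul continuous_const)).add
        (continuous_snd.smul continuous_const)
    have h1 : Tendsto ψ (nhds (p + (0:ℂ) • u + t • v)) (nhds (ψ (p + (0:ℂ) • u + t • v))) :=
      (hψ.differentiableAt (hΩ.mem_nhds htΩ)).continuousAt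
    have ht2 := (h1.comp (hQc.tendsto ((0:ℂ), t))).norm
    have hval : c / 2 < ‖ψ (p + (0:ℂ) • u + t • v)‖ := by
      have : c ≤ ‖φ t‖ := hmin ht
      have heq : ψ (p + (0:ℂ) • u + t • v) = φ t := by simp [hφ, hm]
      rw [heq]; linarith
    have hevt := ht2.eventually_const_lt hval
    exact hevt.mono fun z hz => le_of_lt hz
  have hev2 : ∀ᶠ s in nhds (0:ℂ), ‖ψ (p + s • u + (0:ℂ) • v)‖ < c / 2 := by
    have hpt : p + (0:ℂ) • u + (0:ℂ) • v ∈ Ω := hQΩ 0 0 (by simp; linarith) (by simp; linarith)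
    have hQc : Continuous (fun s : ℂ => p + s • u + (0:ℂ) • v) :=
      (continuous_const.add (continuous_id.smul continuous_const)).add continuous_const
    have h1 : Tendsto ψ (nhds (p + (0:ℂ) • u + (0:ℂ) • v))
        (nhds (ψ (p + (0:ℂ) • u + (0:ℂ) • v))) :=
      (hψ.differentiableAt (hΩ.mem_nhds hpt)).continuousAt
    have ht2 := (h1.comp (hQc.tendsto 0)).norm
    have hval : ‖ψ (p + (0:ℂ) • u + (0:ℂ) • v)‖ < c / 2 := by
      have hpp : p + (0:ℂ) • u + (0:ℂ) • v = p := by simp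
      rw [hpp, hpS.2, norm_zero]; linarith
    exact ht2.eventually_lt_const hval
  have hev3 : ∀ᶠ s : ℂ in nhds 0, ‖s‖ < ε / 2 := by
    have : 0 < ε / 2 := by linarith
    filter_upwards [Metric.ball_mem_nhds (0:ℂ) this] with s hs
    simpa [dist_zero_right] using hs
  obtain ⟨δ, hδ, hδball⟩ := Metric.eventually_nhds_iff_ball.mp ((hev1.and hev2).and hev3)
  set s₀ : ℂ := ((min (δ / 2) (ε / 4) : ℝ) : ℂ) with hs₀def
  have hmin2 : (0:ℝ) < min (δ / 2) (ε / 4) := lt_min (by linarith) (by linarith)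
  have hs₀mem : s₀ ∈ ball (0:ℂ) δ := by
    rw [mem_ball, dist_zero_right, hs₀def, Complex.norm_real, Real.norm_eq_abs,
      abs_of_nonneg hmin2.le]
    exact lt_of_le_of_lt (min_le_left _ _) (by linarith)
  obtain ⟨⟨H1, H2⟩, H3⟩ := hδball s₀ hs₀mem
  -- there is a zero of ψ on the closed disc in the line {p + s₀ u + t v}
  have hs₀ε : ‖s₀‖ ≤ ε / 2 := by
    rw [hs₀def, Complex.norm_real, Real.norm_eq_abs, abs_of_nonneg hmin2.le]
    calc min (δ / 2) (ε / 4) ≤ ε / 4 := min_le_right _ _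
      _ ≤ ε / 2 := by linarith
  have hzero : ∃ t ∈ closedBall (0:ℂ) r, ψ (p + s₀ • u + t • v) = 0 := by
    by_contra h'
    push_neg at h'
    set g1 : ℂ → ℂ := fun t => (ψ (p + s₀ • u + t • v))⁻¹ with hg1
    have hmem : ∀ t ∈ closedBall (0:ℂ) r, p + s₀ • u + t • v ∈ Ω := by
      intro t ht
      refine hQΩ s₀ t hs₀ε ?_
      rw [mem_closedBall, dist_zero_right] at ht
      linarith [hrε]
    have haff : Differentiable ℂ (fun t : ℂ => p + s₀ • u + t • v) :=
      (differentiable_id.smul_const v).const_add (p + s₀ • u)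
    have hdiffinner : ∀ t ∈ closedBall (0:ℂ) r,
        DifferentiableAt ℂ (fun t : ℂ => ψ (p + s₀ • u + t • v)) t := by
      intro t ht
      exact (hψ.differentiableAt (hΩ.mem_nhds (hmem t ht))).comp t (haff t)
    have hdiff : DifferentiableOn ℂ g1 (ball (0:ℂ) r) := by
      intro t ht
      have ht' := ball_subset_closedBall ht
      exact (((hdiffinner t ht').inv (h' t ht')).differentiableWithinAt)
    have hcont : ContinuousOn g1 (closedBall (0:ℂ) r) := by
      intro t ht
      exact (((hdiffinner t ht).inv (h' t ht)).continuousAt).continuousWithinAt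
    have hDCC : DiffContOnCl ℂ g1 (ball (0:ℂ) r) :=
      ⟨hdiff, by rwa [closure_ball (0:ℂ) hr.ne']⟩
    have hfr : ∀ t ∈ frontier (ball (0:ℂ) r), ‖g1 t‖ ≤ 2 / c := by
      rw [frontier_ball (0:ℂ) hr.ne']
      intro t ht
      have h1 := H1 t ht
      have hxpos : 0 < ‖ψ (p + s₀ • u + t • v)‖ :=
        norm_pos_iff.mpr (h' t (sphere_subset_closedBall ht))
      rw [hg1]
      simp only [norm_inv]
      rw [inv_le_comm₀ hxpos (by positivity)]
      calc (2 / c)⁻¹ = c / 2 := by field_simp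
        _ ≤ ‖ψ (p + s₀ • u + t • v)‖ := h1
    have h0cl : (0:ℂ) ∈ closure (ball (0:ℂ) r) := by
      rw [closure_ball (0:ℂ) hr.ne']
      exact mem_closedBall_self hr.le
    have hmax := Complex.norm_le_of_forall_mem_frontier_norm_le Metric.isBounded_ball
      hDCC hfr h0cl
    have hne0 := h' 0 (mem_closedBall_self hr.le)
    rw [hg1] at hmax
    simp only [norm_inv] at hmax
    have hxpos : 0 < ‖ψ (p + s₀ • u + (0:ℂ) • v)‖ := norm_pos_iff.mpr hne0
    have hmul : ‖ψ (p + s₀ • u + (0:ℂ) • v)‖ * ‖ψ (p + s₀ • u + (0:ℂ) • v)‖⁻¹ = 1 :=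
      mul_inv_cancel₀ hxpos.ne'
    have ha : ‖ψ (p + s₀ • u + (0:ℂ) • v)‖ * ‖ψ (p + s₀ • u + (0:ℂ) • v)‖⁻¹ ≤
        ‖ψ (p + s₀ • u + (0:ℂ) • v)‖ * (2 / c) :=
      mul_le_mul_of_nonneg_left hmax hxpos.le
    have hb : ‖ψ (p + s₀ • u + (0:ℂ) • v)‖ * (2 / c) < (c / 2) * (2 / c) :=
      mul_lt_mul_of_pos_right H2 (by positivity)
    have hcc : (c / 2) * (2 / c) = 1 := by field_simp
    linarith
  obtain ⟨t₁, ht₁, hzero₁⟩ := hzero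
  set q : Fin n → ℂ := p + s₀ • u + t₁ • v with hq
  have hqΩ : q ∈ Ω := by
    refine hQΩ s₀ t₁ hs₀ε ?_
    rw [mem_closedBall, dist_zero_right] at ht₁
    linarith [hrε]
  have hqS : q ∈ S := ⟨hqΩ, hzero₁⟩
  have hlq : ℓ q = ℓ p + min (δ / 2) (ε / 4) := by
    have hqi0 : q i0 = p i0 + s₀ := by
      simp [hq, hu, hv, Pi.single_eq_same, Pi.single_eq_of_ne hi01]
    rw [hℓ]
    simp only [hqi0, Complex.add_re, hs₀def, Complex.ofReal_re]
  have hle : ℓ q ≤ ℓ p := hpmax hqS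
  rw [hlq] at hle
  linarith

lemma omega_preconnected {n : ℕ} (hn : 1 ≤ n) {Ω K : Set (Fin n → ℂ)}
    (hΩ : IsOpen Ω) (hK : IsCompact K) (hKΩ : K ⊆ Ω) (hconn : IsConnected (Ω \ K)) :
    IsPreconnected Ω := by
  haveI : Nonempty (Fin n) := ⟨⟨0, by omega⟩⟩
  intro U V hU hV hcov hUne hVne
  by_contra hcontra
  rw [Set.not_nonempty_iff_eq_empty] at hcontra
  have key : ∀ W W' : Set (Fin n → ℂ), IsOpen W → IsOpen W' → Ω ⊆ W ∪ W' →
      Ω ∩ (W ∩ W') = ∅ → (Ω \ K) ∩ W' = ∅ → (Ω ∩ W').Nonempty → False := by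
    rintro W W' hW hW' hcov' hempty hmiss ⟨y, hyΩ, hyW'⟩
    set C : Set (Fin n → ℂ) := Ω ∩ W' with hC
    have hCK : C ⊆ K := by
      rintro z ⟨hzΩ, hzW'⟩
      by_contra hzK
      exact absurd (Set.eq_empty_iff_forall_notMem.mp hmiss z) (fun h => h ⟨⟨hzΩ, hzK⟩, hzW'⟩)
    have hCcl : IsClosed C := by
      rw [← closure_subset_iff_isClosed]
      intro z hz
      have hzK : z ∈ K := hK.isClosed.closure_subset (closure_mono hCK hz)
      have hzΩ : z ∈ Ω := hKΩ hzK
      rcases hcov' hzΩ with hzW | hzW'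
      · exfalso
        obtain ⟨w, hwW, hwC⟩ := mem_closure_iff.mp hz W hW hzW
        exact absurd (Set.eq_empty_iff_forall_notMem.mp hempty w)
          (fun h => h ⟨hwC.1, hwW, hwC.2⟩)
      · exact ⟨hzΩ, hzW'⟩
    have hCopen : IsOpen C := hΩ.inter hW'
    rcases isClopen_iff.mp ⟨hCcl, hCopen⟩ with h | h
    · have hyC : y ∈ C := ⟨hyΩ, hyW'⟩
      rw [h] at hyC
      exact Set.notMem_empty y hyC
    · have huniv : IsCompact (univ : Set (Fin n → ℂ)) :=
        hK.of_isClosed_subset isClosed_univ (by rw [← h]; exact hCK)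
      exact noncompact_univ (Fin n → ℂ) huniv
  -- now split cases on which side Ω \ K misses
  by_cases h1 : ((Ω \ K) ∩ U).Nonempty
  · by_cases h2 : ((Ω \ K) ∩ V).Nonempty
    · obtain ⟨w, hw⟩ := hconn.isPreconnected U V hU hV
        ((Set.diff_subset).trans hcov) h1 h2
      exact absurd (Set.eq_empty_iff_forall_notMem.mp hcontra w)
        (fun h => h ⟨hw.1.1, hw.2⟩)
    · rw [Set.not_nonempty_iff_eq_empty] at h2
      exact key U V hU hV hcov hcontra h2 hVne
  · rw [Set.not_nonempty_iff_eq_empty] at h1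
    have hcontra' : Ω ∩ (V ∩ U) = ∅ := by rwa [Set.inter_comm V U]
    exact key V U hV hU (fun z hz => Or.symm (hcov hz)) hcontra' h1 hUne


theorem composition_with_extension (n : ℕ) (hn : 2 ≤ n)
    (Ω K : Set (Fin n → ℂ)) (hΩ : IsOpen Ω) (hK : IsCompact K) (hKΩ : K ⊆ Ω)
    (hconn : IsConnected (Ω \ K))
    (D : Set ℂ) (hD : IsOpen D) (g : ℂ → ℂ) (hg : DifferentiableOn ℂ g D)
    (f : (Fin n → ℂ) → ℂ) (hf : DifferentiableOn ℂ f (Ω \ K))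
    (hfD : f '' (Ω \ K) ⊆ D)
    (F : (Fin n → ℂ) → ℂ) (hF : DifferentiableOn ℂ F Ω) (hFf : Set.EqOn F f (Ω \ K)) :
    F '' Ω ⊆ D ∧
      DifferentiableOn ℂ (g ∘ F) Ω ∧ Set.EqOn (g ∘ F) (g ∘ f) (Ω \ K) ∧
      ∀ H : (Fin n → ℂ) → ℂ, DifferentiableOn ℂ H Ω → Set.EqOn H (g ∘ f) (Ω \ K) →
        Set.EqOn H (g ∘ F) Ω := by
  have hΩKopen : IsOpen (Ω \ K) := hΩ.sdiff hK.isClosed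
  have hΩKne : (Ω \ K).Nonempty := hconn.nonempty
  -- compact excision: F '' Ω ⊆ f '' (Ω \ K)
  have key : ∀ w : ℂ, w ∉ f '' (Ω \ K) → ∀ z ∈ Ω, F z ≠ w := by
    intro w hw
    have hψd : DifferentiableOn ℂ (fun z => F z - w) Ω := hF.sub_const w
    have hψne : ∀ z ∈ Ω \ K, F z - w ≠ 0 := by
      intro z hz h0
      exact hw ⟨z, hz, by rw [← hFf hz]; exact sub_eq_zero.mp h0⟩
    intro z hz hFz
    exact excision hn hΩ hK hKΩ hψd hψne z hz (sub_eq_zero.mpr hFz)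
  have himg : F '' Ω ⊆ D := by
    rintro _ ⟨z, hz, rfl⟩
    by_contra hFD
    have hnotin : F z ∉ f '' (Ω \ K) := fun h => hFD (hfD h)
    exact key (F z) hnotin z hz rfl
  have hmaps : Set.MapsTo F Ω D := fun z hz => himg ⟨z, hz, rfl⟩
  have hcomp : DifferentiableOn ℂ (g ∘ F) Ω := hg.comp hF hmaps
  have heq : Set.EqOn (g ∘ F) (g ∘ f) (Ω \ K) := fun z hz => by
    simp only [Function.comp_apply, hFf hz]
  refine ⟨himg, hcomp, heq, ?_⟩
  intro H hH hHeq
  have hpre : IsPreconnected Ω := omega_preconnected (by omega) hΩ hK hKΩ hconn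
  obtain ⟨z₀, hz₀⟩ := hΩKne
  have hdiff : DifferentiableOn ℂ (fun z => H z - (g ∘ F) z) Ω := hH.sub hcomp
  have hev : ∀ᶠ x in nhds z₀, H x - (g ∘ F) x = 0 := by
    filter_upwards [hΩKopen.mem_nhds hz₀] with x hx
    rw [hHeq hx, heq hx, sub_self]
  have := eqOn_zero_of_preconnected_of_eventuallyEq_zero' hΩ hpre hdiff
    (Set.diff_subset hz₀) hev
  intro z hz
  have hz' := this hz
  simpa [sub_eq_zero] using hz'
end
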